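/- arXiv:2302.01487 — 9 statements merged into one kernel-verified Lean document; each statement's English description precedes it below -/
import Mathlib

section
/- Let p be an odd prime and L = ⟨−1, 2⟩ the subgroup of (Z/pZ)^× generated by −1 and 2, of index ℓ ≥ 3. The quantity s(ℓ) = Σ_{1 ≤ i ≤ ℓ, gcd(i,ℓ)=1} A_g(i, 2i) is independent of the choice of primitive root g; i.e., for any two primitive roots g and h of Z/pZ, Σ_{1 ≤ i ≤ ℓ, gcd(i,ℓ)=1} |(1 + g^i L) ∩ g^{2i} L| = Σ_{1 ≤ i ≤ ℓ, gcd(i,ℓ)=1} |(1 + h^i L) ∩ h^{2i} L|. -/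
/-!
Since `g ^ ℓ ∈ L`, the number `A_g(i, j)` depends only on `i` and `j` modulo `ℓ`. If `h = g ^ n`
then `h ^ i L = g ^ (n i) L`, so `A_h(i, j) = A_g(n i, n j)`; and as `h` also generates, `n` is
a unit modulo `ℓ`. Hence the sum for `h` is the sum for `g` reindexed by `i ↦ n i` on
`(ℤ/ℓℤ)ˣ`, which the integers `1 ≤ i ≤ ℓ` coprime to `ℓ` represent exactly once each.
-/

/-- The coset `g^i H` viewed as a subset of `ZMod p`. -/
def coset (p : ℕ) (g : (ZMod p)ˣ) (H : Subgroup (ZMod p)ˣ) (i : ℤ) : Set (ZMod p) :=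
  (fun h : (ZMod p)ˣ => ((g ^ i * h : (ZMod p)ˣ) : ZMod p)) '' (H : Set (ZMod p)ˣ)

/-- The cyclotomic number `A(i,j) = |(1 + g^i H) ∩ g^j H|`. -/
noncomputable def cyc (p : ℕ) (g : (ZMod p)ˣ) (H : Subgroup (ZMod p)ˣ) (i j : ℤ) : ℕ :=
  (((fun x => 1 + x) '' coset p g H i) ∩ coset p g H j).ncard

section Reindexing

variable {ℓ : ℕ} [NeZero ℓ] {M : Type*} [AddCommMonoid M]

theorem sum_Icc_one_natCast_eq_sum_zmod (F : ZMod ℓ → M) :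
    ∑ i ∈ Finset.Icc 1 ℓ, F i = ∑ x : ZMod ℓ, F x := by
  refine Finset.sum_nbij' (fun i => (i : ZMod ℓ)) (fun x => (x - 1).val + 1)
    (fun _ _ => Finset.mem_univ _) (fun x _ => ?_) (fun i hi => ?_) (fun x _ => by simp) (fun _ _ => rfl)
  · exact Finset.mem_Icc.mpr ⟨Nat.le_add_left 1 _, (x - 1).val_lt⟩
  · obtain ⟨hi1, hiℓ⟩ := Finset.mem_Icc.mp hi
    have hcast : (i : ZMod ℓ) - 1 = ((i - 1 : ℕ) : ZMod ℓ) := by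
      rw [Nat.cast_sub hi1, Nat.cast_one]
    simp only [hcast, ZMod.val_natCast_of_lt (by omega : i - 1 < ℓ)]
    omega

theorem sum_coprime_Icc_eq_sum_isUnit (F : ZMod ℓ → M) :
    ∑ i ∈ (Finset.Icc 1 ℓ).filter (fun i => Nat.gcd i ℓ = 1), F i
      = ∑ x : ZMod ℓ, if IsUnit x then F x else 0 := by
  rw [Finset.sum_filter, ← sum_Icc_one_natCast_eq_sum_zmod]
  simp only [ZMod.isUnit_iff_coprime, Nat.Coprime]

theorem sum_coprime_Icc_comp_units_mul (u : (ZMod ℓ)ˣ) (F : ZMod ℓ → M) :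
    ∑ i ∈ (Finset.Icc 1 ℓ).filter (fun i => Nat.gcd i ℓ = 1), F (u * i)
      = ∑ i ∈ (Finset.Icc 1 ℓ).filter (fun i => Nat.gcd i ℓ = 1), F i := by
  rw [sum_coprime_Icc_eq_sum_isUnit (fun x : ZMod ℓ => F (u * x)), sum_coprime_Icc_eq_sum_isUnit]
  exact Fintype.sum_equiv (Units.mulLeft u) _ _ fun x => by
    simp only [Units.mulLeft_apply, Units.isUnit_units_mul]

end Reindexing

theorem intCast_mul_eq_one_of_zpow_zpow_eq {G : Type*} [Group G] {g : G} {ℓ : ℕ}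
    (hℓ : ℓ ∣ orderOf g) {n m : ℤ} (h : (g ^ n) ^ m = g) : (n : ZMod ℓ) * m = 1 := by
  have hone : g ^ (n * m - 1) = 1 := by
    rw [zpow_sub, zpow_mul, h, zpow_one, mul_inv_cancel]
  have hdvd : (ℓ : ℤ) ∣ n * m - 1 :=
    (Int.natCast_dvd_natCast.mpr hℓ).trans (orderOf_dvd_iff_zpow_eq_one.mpr hone)
  have := (ZMod.intCast_zmod_eq_zero_iff_dvd (n * m - 1) ℓ).mpr hdvd
  push_cast at this
  exact sub_eq_zero.mp this

section Cyclotomic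

variable {p : ℕ} (g : (ZMod p)ˣ) (L : Subgroup (ZMod p)ˣ)

theorem coset_eq_of_zpow_sub_mem {i j : ℤ} (hij : g ^ (i - j) ∈ L) :
    coset p g L i = coset p g L j := by
  have hsplit : g ^ i = g ^ j * g ^ (i - j) := by rw [← zpow_add, add_sub_cancel]
  ext x
  simp only [coset, Set.mem_image, SetLike.mem_coe]
  constructor
  · rintro ⟨y, hy, rfl⟩
    exact ⟨g ^ (i - j) * y, L.mul_mem hij hy, by rw [hsplit, mul_assoc]⟩
  · rintro ⟨y, hy, rfl⟩
    exact ⟨(g ^ (i - j))⁻¹ * y, L.mul_mem (L.inv_mem hij) hy, by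
      rw [hsplit, mul_assoc, mul_inv_cancel_left]⟩

theorem coset_eq_of_modEq {i j : ℤ} (hij : i ≡ j [ZMOD L.index]) :
    coset p g L i = coset p g L j := by
  obtain ⟨c, hc⟩ := (Int.ModEq.dvd hij.symm)
  refine coset_eq_of_zpow_sub_mem g L ?_
  rw [hc, zpow_mul, zpow_natCast]
  exact L.zpow_mem (L.pow_index_mem g) c

theorem cyc_eq_cyc_val [NeZero L.index] (i j : ℤ) :
    cyc p g L i j = cyc p g L (i : ZMod L.index).val (j : ZMod L.index).val := by
  have hval (k : ℤ) : k ≡ (k : ZMod L.index).val [ZMOD L.index] := by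
    rw [← ZMod.intCast_eq_intCast_iff, Int.cast_natCast, ZMod.natCast_zmod_val]
  simp only [cyc, coset_eq_of_modEq g L (hval i), coset_eq_of_modEq g L (hval j)]

theorem cyc_zpow (n i j : ℤ) : cyc p (g ^ n) L i j = cyc p g L (n * i) (n * j) := by
  simp only [cyc, coset, zpow_mul]

end Cyclotomic

theorem stmt_4_general (p : ℕ) [Fact p.Prime]
    (L : Subgroup (ZMod p)ˣ)
    (ℓ : ℕ) (hℓ : L.index = ℓ)
    (g h : (ZMod p)ˣ)
    (hg : ∀ x : (ZMod p)ˣ, x ∈ Subgroup.zpowers g)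
    (hh : ∀ x : (ZMod p)ˣ, x ∈ Subgroup.zpowers h) :
    ∑ i ∈ (Finset.Icc 1 ℓ).filter (fun i => Nat.gcd i ℓ = 1),
        cyc p g L (i : ℤ) (2 * (i : ℤ))
      = ∑ i ∈ (Finset.Icc 1 ℓ).filter (fun i => Nat.gcd i ℓ = 1),
        cyc p h L (i : ℤ) (2 * (i : ℤ)) := by
  subst hℓ
  have : NeZero L.index := ⟨Subgroup.index_ne_zero_of_finite⟩
  obtain ⟨n, rfl⟩ := Subgroup.mem_zpowers_iff.mp (hg h)
  obtain ⟨m, hm⟩ := Subgroup.mem_zpowers_iff.mp (hh g)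
  have hdvd : L.index ∣ orderOf g := by
    rw [orderOf_eq_card_of_forall_mem_zpowers hg]
    exact L.index_dvd_card
  let u : (ZMod L.index)ˣ :=
    Units.mkOfMulEqOne _ _ (intCast_mul_eq_one_of_zpow_zpow_eq hdvd hm)
  let F : ZMod L.index → ℕ := fun x => cyc p g L x.val (2 * x).val
  have hF (k : ℤ) : cyc p g L k (2 * k) = F k := by
    rw [cyc_eq_cyc_val]
    push_cast
    rfl
  have hFn (i : ℕ) : cyc p (g ^ n) L i (2 * i) = F (u * i) := by
    rw [cyc_zpow, mul_left_comm, hF]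
    push_cast
    rfl
  simp only [hF, hFn, Int.cast_natCast]
  exact (sum_coprime_Icc_comp_units_mul u F).symm

theorem stmt_4 (p : ℕ) [Fact p.Prime] (hodd : Odd p)
    (u : (ZMod p)ˣ) (hu : (u : ZMod p) = 2)
    (L : Subgroup (ZMod p)ˣ) (hL : L = Subgroup.closure {-1, u})
    (ℓ : ℕ) (hℓ : L.index = ℓ) (hℓ3 : 3 ≤ ℓ)
    (g h : (ZMod p)ˣ)
    (hg : ∀ x : (ZMod p)ˣ, x ∈ Subgroup.zpowers g)
    (hh : ∀ x : (ZMod p)ˣ, x ∈ Subgroup.zpowers h) :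
    ∑ i ∈ (Finset.Icc 1 ℓ).filter (fun i => Nat.gcd i ℓ = 1),
        cyc p g L (i : ℤ) (2 * (i : ℤ))
      = ∑ i ∈ (Finset.Icc 1 ℓ).filter (fun i => Nat.gcd i ℓ = 1),
        cyc p h L (i : ℤ) (2 * (i : ℤ)) :=
  stmt_4_general p L ℓ hℓ g h hg hh
end

section
/- Let p be an odd prime, H ≤ (Z/pZ)^× a subgroup of index ℓ ≥ 3 containing −1 and 2, and g a primitive root. Then the number of squares in the set 1 + H = {1 + h : h ∈ H} (squares meaning elements of the form x^2 in Z/pZ, including 0) equals (1/2) + (1/2)·Σ_{i=0}^{ℓ−1} A(i, −i), where A(i,j) = |(1 + g^i H) ∩ g^j H|. -/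
lemma aux_zpow_mem (p : ℕ) [Fact p.Prime] (H : Subgroup (ZMod p)ˣ) (ℓ : ℕ) (hℓ : H.index = ℓ)
    (g : (ZMod p)ˣ) (hg : ∀ x : (ZMod p)ˣ, x ∈ Subgroup.zpowers g) (m : ℤ) :
    g ^ m ∈ H ↔ (ℓ : ℤ) ∣ m := by
  have hord : orderOf ((g : (ZMod p)ˣ) : (ZMod p)ˣ ⧸ H) = ℓ := by
    rw [← Nat.card_zpowers]
    have htop : Subgroup.zpowers ((g : (ZMod p)ˣ) : (ZMod p)ˣ ⧸ H) = ⊤ := by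
      rw [Subgroup.eq_top_iff']
      intro q
      obtain ⟨x, rfl⟩ := QuotientGroup.mk_surjective q
      obtain ⟨n, rfl⟩ := hg x
      exact ⟨n, by simp⟩
    rw [htop, ← hℓ, Subgroup.index]
    exact Nat.card_congr Subgroup.topEquiv.toEquiv
  rw [← QuotientGroup.eq_one_iff, QuotientGroup.mk_zpow, ← orderOf_dvd_iff_zpow_eq_one, hord]

/-- The sum of the cyclotomic numbers `A(i,-i)` counts `x` with `x(x-1) ∈ H`. -/
lemma sum_cyc (p : ℕ) [Fact p.Prime] (H : Subgroup (ZMod p)ˣ) (ℓ : ℕ) (hℓ : H.index = ℓ)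
    (hℓ0 : 0 < ℓ) (g : (ZMod p)ˣ) (hg : ∀ x : (ZMod p)ˣ, x ∈ Subgroup.zpowers g) :
    ∑ i ∈ Finset.range ℓ, cyc p g H (i : ℤ) (-(i : ℤ)) =
      {x : ZMod p | ∃ u v : (ZMod p)ˣ,
        (u : ZMod p) = x - 1 ∧ (v : ZMod p) = x ∧ u * v ∈ H}.ncard := by
  classical
  have key := aux_zpow_mem p H ℓ hℓ g hg
  set W : Set (ZMod p) := {x : ZMod p | ∃ u v : (ZMod p)ˣ,
      (u : ZMod p) = x - 1 ∧ (v : ZMod p) = x ∧ u * v ∈ H} with hW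
  set S : ℕ → Set (ZMod p) :=
    fun i => ((fun x => 1 + x) '' coset p g H (i : ℤ)) ∩ coset p g H (-(i : ℤ)) with hS
  set Sf : ℕ → Finset (ZMod p) := fun i => (Set.toFinite (S i)).toFinset with hSf
  have memS : ∀ (i : ℕ) (x : ZMod p), x ∈ S i ↔
      (∃ a ∈ H, 1 + ((g ^ (i : ℤ) * a : (ZMod p)ˣ) : ZMod p) = x) ∧
      (∃ b ∈ H, ((g ^ (-(i : ℤ)) * b : (ZMod p)ˣ) : ZMod p) = x) := by
    intro i x
    show x ∈ ((fun x => 1 + x) '' coset p g H (i : ℤ)) ∩ coset p g H (-(i : ℤ)) ↔ _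
    rw [Set.mem_inter_iff]
    constructor
    · rintro ⟨h1, h2⟩
      obtain ⟨y, hy, hyx⟩ := h1
      obtain ⟨a, ha, rfl⟩ := hy
      obtain ⟨b, hb, hbx⟩ := h2
      exact ⟨⟨a, ha, hyx⟩, ⟨b, hb, hbx⟩⟩
    · rintro ⟨⟨a, ha, hax⟩, ⟨b, hb, hbx⟩⟩
      exact ⟨⟨_, ⟨a, ha, rfl⟩, hax⟩, ⟨b, hb, hbx⟩⟩
  have hdisj : ∀ i ∈ Finset.range ℓ, ∀ j ∈ Finset.range ℓ, i ≠ j →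
      Disjoint (Sf i) (Sf j) := by
    intro i hi j hj hij
    rw [Finset.disjoint_left]
    intro x hxi hxj
    rw [hSf, Set.Finite.mem_toFinset, memS] at hxi hxj
    obtain ⟨-, b, hb, hbx⟩ := hxi
    obtain ⟨-, b', hb', hbx'⟩ := hxj
    have e : g ^ (-(i : ℤ)) * b = g ^ (-(j : ℤ)) * b' := Units.ext (hbx.trans hbx'.symm)
    have e2 : g ^ ((j : ℤ) - (i : ℤ)) = b' * b⁻¹ := by
      have e3 : g ^ ((j : ℤ)) * (g ^ (-(i : ℤ)) * b) * b⁻¹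
          = g ^ ((j : ℤ)) * (g ^ (-(j : ℤ)) * b') * b⁻¹ := by rw [e]
      rw [← mul_assoc, ← zpow_add, ← mul_assoc, ← zpow_add] at e3
      simpa [mul_assoc, sub_eq_add_neg] using e3
    have hmem : g ^ ((j : ℤ) - (i : ℤ)) ∈ H := by
      rw [e2]; exact H.mul_mem hb' (H.inv_mem hb)
    rw [key] at hmem
    have : ((j : ℤ) - (i : ℤ)) = 0 := by
      refine Int.eq_zero_of_abs_lt_dvd hmem ?_
      simp only [Finset.mem_range] at hi hj
      rw [abs_lt]
      omega
    exact hij (by omega)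
  have hunion : (Finset.range ℓ).biUnion Sf = (Set.toFinite W).toFinset := by
    ext x
    simp only [Finset.mem_biUnion, Finset.mem_range, Set.Finite.mem_toFinset, hSf]
    constructor
    · rintro ⟨i, hi, hx⟩
      rw [memS] at hx
      obtain ⟨⟨a, ha, hax⟩, b, hb, hbx⟩ := hx
      refine ⟨g ^ (i : ℤ) * a, g ^ (-(i : ℤ)) * b, ?_, hbx, ?_⟩
      · rw [eq_sub_iff_add_eq, add_comm]; exact hax
      · have : g ^ (i : ℤ) * a * (g ^ (-(i : ℤ)) * b) = a * b := by
          rw [mul_mul_mul_comm, ← zpow_add, add_neg_cancel, zpow_zero, one_mul]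
        rw [this]; exact H.mul_mem ha hb
    · rintro ⟨u, v, hu, hv, huv⟩
      obtain ⟨k, hk⟩ := (Subgroup.mem_zpowers_iff).1 (hg v)
      have hℓne : (ℓ : ℤ) ≠ 0 := by exact_mod_cast hℓ0.ne'
      set i : ℕ := ((-k) % (ℓ : ℤ)).toNat with hidef
      have h1 : 0 ≤ (-k) % (ℓ : ℤ) := Int.emod_nonneg _ hℓne
      have h2 : (-k) % (ℓ : ℤ) < ℓ := Int.emod_lt_of_pos _ (by exact_mod_cast hℓ0)
      have hik : ((i : ℤ)) = (-k) % (ℓ : ℤ) := Int.toNat_of_nonneg h1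
      have hiℓ : i < ℓ := by omega
      have hdvd0 : (ℓ : ℤ) ∣ (-k) - (-k) % (ℓ : ℤ) := Int.dvd_self_sub_of_emod_eq rfl
      have hdvd1 : (ℓ : ℤ) ∣ ((i : ℤ) + k) := by
        have h4 : ((i : ℤ) + k) = -((-k) - (-k) % (ℓ : ℤ)) := by rw [hik]; ring
        rw [h4]; exact dvd_neg.2 hdvd0
      have hdvd2 : (ℓ : ℤ) ∣ (-(i : ℤ) + -k) := by
        have h4 : (-(i : ℤ) + -k) = -((i : ℤ) + k) := by ring
        rw [h4]; exact dvd_neg.2 hdvd1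
      refine ⟨i, hiℓ, (memS i x).2 ⟨⟨g ^ (-(i : ℤ) + -k) * (u * v), ?_, ?_⟩,
        ⟨g ^ ((i : ℤ) + k), (key _).2 hdvd1, ?_⟩⟩⟩
      · exact H.mul_mem ((key _).2 hdvd2) huv
      · have he : g ^ (i : ℤ) * (g ^ (-(i : ℤ) + -k) * (u * v)) = u := by
          rw [← mul_assoc, ← zpow_add]
          have h3 : (i : ℤ) + (-(i : ℤ) + -k) = -k := by ring
          rw [h3, zpow_neg, hk, mul_comm u v, ← mul_assoc, inv_mul_cancel, one_mul]
        rw [he, hu]; ring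
      · have he : g ^ (-(i : ℤ)) * g ^ ((i : ℤ) + k) = v := by
          rw [← zpow_add]
          have h3 : -(i : ℤ) + ((i : ℤ) + k) = k := by ring
          rw [h3, hk]
        rw [he, hv]
  calc ∑ i ∈ Finset.range ℓ, cyc p g H (i : ℤ) (-(i : ℤ))
      = ∑ i ∈ Finset.range ℓ, (Sf i).card := by
        refine Finset.sum_congr rfl fun i _ => ?_
        rw [hSf]
        exact Set.ncard_eq_toFinset_card _ _
    _ = ((Finset.range ℓ).biUnion Sf).card := (Finset.card_biUnion hdisj).symm
    _ = W.ncard := by rw [hunion, Set.ncard_eq_toFinset_card _ (Set.toFinite W)]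


/-- Bijection `z ↦ 2z - 1` between `{x : x(x-1) ∈ H}` and `{y : y² - 1 ∈ H}`. -/
lemma card_V_eq_card_W (p : ℕ) [Fact p.Prime] (H : Subgroup (ZMod p)ˣ)
    (u2 : (ZMod p)ˣ) (hu2 : (u2 : ZMod p) = 2) (hu2H : u2 ∈ H) :
    {y : ZMod p | ∃ w : (ZMod p)ˣ, w ∈ H ∧ (w : ZMod p) = y ^ 2 - 1}.ncard
      = {x : ZMod p | ∃ u v : (ZMod p)ˣ,
          (u : ZMod p) = x - 1 ∧ (v : ZMod p) = x ∧ u * v ∈ H}.ncard := by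
  have h2ne : (2 : ZMod p) ≠ 0 := hu2 ▸ u2.ne_zero
  have h2c : (2 : ZMod p) * ((u2⁻¹ : (ZMod p)ˣ) : ZMod p) = 1 := by
    rw [← hu2, ← Units.val_mul, mul_inv_cancel, Units.val_one]
  have hinj : Function.Injective (fun z : ZMod p => 2 * z - 1) := by
    intro a b hab
    simp only at hab
    have h : (2 : ZMod p) * a = 2 * b := by linear_combination hab
    exact mul_left_cancel₀ h2ne h
  have himg : {y : ZMod p | ∃ w : (ZMod p)ˣ, w ∈ H ∧ (w : ZMod p) = y ^ 2 - 1}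
      = (fun z : ZMod p => 2 * z - 1) '' {x : ZMod p | ∃ u v : (ZMod p)ˣ,
          (u : ZMod p) = x - 1 ∧ (v : ZMod p) = x ∧ u * v ∈ H} := by
    ext y
    constructor
    · rintro ⟨w, hwH, hw⟩
      set c : ZMod p := ((u2⁻¹ : (ZMod p)ˣ) : ZMod p) with hc
      refine ⟨c * (y + 1), ?_, ?_⟩
      · have hz : (c * (y + 1)) * ((c * (y + 1)) - 1)
            = ((w * u2⁻¹ * u2⁻¹ : (ZMod p)ˣ) : ZMod p) := by
          simp only [Units.val_mul, ← hc]
          linear_combination (-(c * c)) * hw + (c * (y + 1)) * h2c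
        have hprod : (c * (y + 1)) * ((c * (y + 1)) - 1) ≠ 0 := by
          rw [hz]; exact Units.ne_zero _
        obtain ⟨hz0, hz1⟩ := mul_ne_zero_iff.1 hprod
        obtain ⟨v, hv⟩ := isUnit_iff_ne_zero.2 hz0
        obtain ⟨u, hu⟩ := isUnit_iff_ne_zero.2 hz1
        refine ⟨u, v, hu, hv, ?_⟩
        have huv : u * v = w * u2⁻¹ * u2⁻¹ := Units.ext (by
          rw [Units.val_mul, hu, hv, mul_comm]; exact hz)
        rw [huv]
        exact H.mul_mem (H.mul_mem hwH (H.inv_mem hu2H)) (H.inv_mem hu2H)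
      · show 2 * (c * (y + 1)) - 1 = y
        rw [← mul_assoc, h2c, one_mul]; ring
    · rintro ⟨z, ⟨u, v, hu, hv, huv⟩, rfl⟩
      refine ⟨u2 * u2 * (u * v), H.mul_mem (H.mul_mem hu2H hu2H) huv, ?_⟩
      simp only [Units.val_mul, hu2, hu, hv]
      ring
  rw [himg, Set.ncard_image_of_injective _ hinj]

/-- The set `{y : y² - 1 ∈ H}` has twice as many elements as
`{x : x ≠ 0 square, x - 1 ∈ H}`, plus one (for `y = 0`). -/
lemma card_V (p : ℕ) [Fact p.Prime] (H : Subgroup (ZMod p)ˣ)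
    (hneg : (-1 : (ZMod p)ˣ) ∈ H) (h2ne : (2 : ZMod p) ≠ 0) :
    {y : ZMod p | ∃ w : (ZMod p)ˣ, w ∈ H ∧ (w : ZMod p) = y ^ 2 - 1}.ncard
      = 2 * {x : ZMod p | x ≠ 0 ∧ IsSquare x ∧
          ∃ h : (ZMod p)ˣ, h ∈ H ∧ (h : ZMod p) = x - 1}.ncard + 1 := by
  classical
  set V : Set (ZMod p) :=
    {y : ZMod p | ∃ w : (ZMod p)ˣ, w ∈ H ∧ (w : ZMod p) = y ^ 2 - 1} with hV
  set T : Set (ZMod p) := {x : ZMod p | x ≠ 0 ∧ IsSquare x ∧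
      ∃ h : (ZMod p)ˣ, h ∈ H ∧ (h : ZMod p) = x - 1} with hT
  have h0V : (0 : ZMod p) ∈ V := ⟨-1, hneg, by norm_num⟩
  have hVsplit : V = insert 0 (V \ {0}) := by
    rw [Set.insert_diff_singleton, Set.insert_eq_of_mem h0V]
  have h1 : V.ncard = (V \ {0}).ncard + 1 := by
    conv_lhs => rw [hVsplit]
    exact Set.ncard_insert_of_notMem (by simp)
  set Vf : Finset (ZMod p) := (Set.toFinite (V \ {0})).toFinset with hVf
  set Tf : Finset (ZMod p) := (Set.toFinite T).toFinset with hTf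
  have him : Vf.image (fun y => y ^ 2) = Tf := by
    ext x
    simp only [Finset.mem_image, Set.Finite.mem_toFinset, hVf, hTf, Set.mem_diff,
      Set.mem_singleton_iff, hV, hT, Set.mem_setOf_eq]
    constructor
    · rintro ⟨y, ⟨⟨w, hwH, hw⟩, hy0⟩, rfl⟩
      exact ⟨pow_ne_zero 2 hy0, ⟨y, (pow_two y)⟩, w, hwH, hw⟩
    · rintro ⟨hx0, ⟨r, hr⟩, h, hH, hhv⟩
      have hr0 : r ≠ 0 := by rintro rfl; exact hx0 (by simpa using hr)
      refine ⟨r, ⟨⟨h, hH, ?_⟩, hr0⟩, ?_⟩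
      · rw [hhv, hr]; ring
      · rw [hr]; ring
  have hfib : ∀ x ∈ Tf, (Vf.filter (fun y => y ^ 2 = x)).card = 2 := by
    intro x hx
    rw [hTf, Set.Finite.mem_toFinset] at hx
    obtain ⟨hx0, ⟨r, hr⟩, h, hH, hhv⟩ := hx
    have hr0 : r ≠ 0 := by rintro rfl; exact hx0 (by simpa using hr)
    have hrr : r ≠ -r := by
      intro hcon
      have h2r : (2 : ZMod p) * r = 0 := by linear_combination hcon
      exact hr0 ((mul_eq_zero.1 h2r).resolve_left h2ne)
    have hfilter : Vf.filter (fun y => y ^ 2 = x) = {r, -r} := by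
      ext y
      simp only [Finset.mem_filter, Finset.mem_insert, Finset.mem_singleton,
        hVf, Set.Finite.mem_toFinset, Set.mem_diff, Set.mem_singleton_iff, hV,
        Set.mem_setOf_eq]
      constructor
      · rintro ⟨-, hy2⟩
        have hfac : (y - r) * (y + r) = 0 := by linear_combination hy2 + hr
        rcases mul_eq_zero.1 hfac with h' | h'
        · exact Or.inl (sub_eq_zero.1 h')
        · exact Or.inr (eq_neg_of_add_eq_zero_left h')
      · rintro (rfl | rfl)
        · exact ⟨⟨⟨h, hH, by rw [hhv, hr]; ring⟩, hr0⟩, by rw [hr]; ring⟩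
        · exact ⟨⟨⟨h, hH, by rw [hhv, hr]; ring⟩, neg_ne_zero.2 hr0⟩, by rw [hr]; ring⟩
    rw [hfilter, Finset.card_insert_of_notMem (by simpa using hrr),
      Finset.card_singleton]
  have h2 : Vf.card = 2 * Tf.card := by
    calc Vf.card = ∑ x ∈ Vf.image (fun y => y ^ 2),
          (Vf.filter fun y => y ^ 2 = x).card :=
        Finset.card_eq_sum_card_image _ _
      _ = ∑ _x ∈ Tf, 2 := by rw [him]; exact Finset.sum_congr rfl hfib
      _ = 2 * Tf.card := by rw [Finset.sum_const, smul_eq_mul, mul_comm]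
  rw [h1, Set.ncard_eq_toFinset_card _ (Set.toFinite (V \ {0})),
    Set.ncard_eq_toFinset_card _ (Set.toFinite T), ← hVf, ← hTf, h2]

theorem stmt_7 (p : ℕ) [Fact p.Prime] (hodd : Odd p)
    (H : Subgroup (ZMod p)ˣ) (ℓ : ℕ) (hℓ : H.index = ℓ) (hℓ3 : 3 ≤ ℓ)
    (hneg : (-1 : (ZMod p)ˣ) ∈ H) (h2 : ∃ u : (ZMod p)ˣ, (u : ZMod p) = 2 ∧ u ∈ H)
    (g : (ZMod p)ˣ) (hg : ∀ x : (ZMod p)ˣ, x ∈ Subgroup.zpowers g) :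
    2 * ({x ∈ (fun h : (ZMod p)ˣ => 1 + (h : ZMod p)) '' (H : Set (ZMod p)ˣ) |
            IsSquare x}).ncard
      = 1 + ∑ i ∈ Finset.range ℓ, cyc p g H (i : ℤ) (-(i : ℤ)) := by
  classical
  obtain ⟨u2, hu2, hu2H⟩ := h2
  have h2ne : (2 : ZMod p) ≠ 0 := hu2 ▸ u2.ne_zero
  have hSset : {x ∈ (fun h : (ZMod p)ˣ => 1 + (h : ZMod p)) '' (H : Set (ZMod p)ˣ) |
      IsSquare x} = insert (0 : ZMod p) {x : ZMod p | x ≠ 0 ∧ IsSquare x ∧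
        ∃ h : (ZMod p)ˣ, h ∈ H ∧ (h : ZMod p) = x - 1} := by
    ext x
    simp only [Set.mem_sep_iff, Set.mem_image, Set.mem_insert_iff, Set.mem_setOf_eq]
    constructor
    · rintro ⟨⟨h, hH, hhx⟩, hsq⟩
      by_cases hx0 : x = 0
      · exact Or.inl hx0
      · exact Or.inr ⟨hx0, hsq, h, hH, by rw [← hhx]; ring⟩
    · rintro (rfl | ⟨hx0, hsq, h, hH, hhv⟩)
      · exact ⟨⟨-1, hneg, by norm_num⟩, ⟨0, by ring⟩⟩
      · exact ⟨⟨h, hH, by rw [hhv]; ring⟩, hsq⟩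
  have h0T : (0 : ZMod p) ∉ {x : ZMod p | x ≠ 0 ∧ IsSquare x ∧
      ∃ h : (ZMod p)ˣ, h ∈ H ∧ (h : ZMod p) = x - 1} := fun h => h.1 rfl
  have e1 := sum_cyc p H ℓ hℓ (by omega) g hg
  have e2 := card_V_eq_card_W p H u2 hu2 hu2H
  have e3 := card_V p H hneg h2ne
  rw [hSset, Set.ncard_insert_of_notMem h0T, e1, ← e2, e3]
  ring
end

section
/- Let p be an odd prime, H ≤ (Z/pZ)^× a subgroup of index ℓ ≥ 3 containing −1 and 2, and g a primitive root. For each k with 1 ≤ k ≤ ℓ−1, the number of squares in the set 1 + g^k H equals (1/2)·Σ_{i=0}^{ℓ−1} A(i, k−i), where A(i,j) = |(1 + g^i H) ∩ g^j H|. -/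
open Finset

theorem orderOf_mk_eq_index {G : Type*} [CommGroup G] {H : Subgroup G} {g : G}
    (hg : ∀ x : G, x ∈ Subgroup.zpowers g) : orderOf (g : G ⧸ H) = H.index := by
  have htop : Subgroup.zpowers (g : G ⧸ H) = ⊤ := by
    rw [Subgroup.eq_top_iff']
    intro q
    obtain ⟨x, rfl⟩ := QuotientGroup.mk_surjective q
    obtain ⟨n, rfl⟩ := hg x
    exact ⟨n, (QuotientGroup.mk_zpow H g n).symm⟩
  rw [← Nat.card_zpowers, htop, Subgroup.card_top, Subgroup.index]

section Field

variable {F : Type*} [Field F]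

theorem ncard_sq_mem_eq_two_mul [Fintype F] [DecidableEq F] (h2 : (2 : F) ≠ 0) {S : Set F}
    (hS : 0 ∉ S) : {w : F | w ^ 2 ∈ S}.ncard = 2 * {y ∈ S | IsSquare y}.ncard := by
  classical
  have hmaps : ∀ w ∈ {w : F | w ^ 2 ∈ S}.toFinset, w ^ 2 ∈ {y ∈ S | IsSquare y}.toFinset := by
    intro w hw
    simp only [Set.mem_toFinset, Set.mem_ofPred_eq] at hw ⊢
    exact ⟨hw, w, sq w⟩
  have hfibers : ∀ y ∈ {y ∈ S | IsSquare y}.toFinset,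
      #{w ∈ {w : F | w ^ 2 ∈ S}.toFinset | w ^ 2 = y} = 2 := by
    rintro _ hy
    obtain ⟨hyS, r, rfl⟩ := Set.mem_toFinset.mp hy
    have hr : r ≠ -r := fun h => by
      have : (2 : F) * r = 0 := by linear_combination h
      exact hS (by simpa [(mul_eq_zero.mp this).resolve_left h2] using hyS)
    have hfiber : {w ∈ {w : F | w ^ 2 ∈ S}.toFinset | w ^ 2 = r * r} = {r, -r} := by
      ext w
      simp only [mem_filter, Set.mem_toFinset, Set.mem_ofPred_eq, mem_insert, mem_singleton,
        ← sq, sq_eq_sq_iff_eq_or_eq_neg]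
      constructor
      · exact And.right
      · rintro (rfl | rfl) <;> simpa [sq] using hyS
    rw [hfiber, card_pair hr]
  rw [Set.ncard_eq_toFinset_card', Set.ncard_eq_toFinset_card',
    card_eq_sum_card_fiberwise hmaps, sum_congr rfl hfibers, sum_const, smul_eq_mul, mul_comm]

theorem ncard_mul_one_add_mem_eq_ncard_sq_mem (h2 : (2 : F) ≠ 0) {C : Set F}
    (hC : ∀ x, 4 * x ∈ C ↔ x ∈ C) :
    {x : F | x * (1 + x) ∈ C}.ncard = {w : F | w ^ 2 ∈ (fun y => 1 + y) '' C}.ncard := by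
  have hpre : {x : F | x * (1 + x) ∈ C} =
      (fun x => 2 * x + 1) ⁻¹' {w : F | w ^ 2 ∈ (fun y => 1 + y) '' C} := by
    ext x
    rw [Set.mem_preimage, Set.mem_ofPred_eq, Set.mem_ofPred_eq, Set.image_add_left,
      Set.mem_preimage, ← hC]
    ring_nf
  rw [hpre]
  refine Set.ncard_preimage_of_injective_subset_range
    ((add_left_injective 1).comp (mul_right_injective₀ h2)) fun w _ => ⟨(w - 1) / 2, ?_⟩
  field_simp
  ring

end Field

section Coset

variable {p : ℕ} {g : (ZMod p)ˣ} {H : Subgroup (ZMod p)ˣ}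

theorem mem_coset_iff {i : ℤ} {x : ZMod p} :
    x ∈ coset p g H i ↔
      ∃ u : (ZMod p)ˣ, (u : ZMod p) = x ∧ (u : (ZMod p)ˣ ⧸ H) = (g : (ZMod p)ˣ ⧸ H) ^ i := by
  constructor
  · rintro ⟨h, hh, rfl⟩
    refine ⟨g ^ i * h, rfl, ?_⟩
    rw [QuotientGroup.mk_mul, (QuotientGroup.eq_one_iff h).mpr hh, QuotientGroup.mk_zpow]
    exact mul_one ((g : (ZMod p)ˣ ⧸ H) ^ i)
  · rintro ⟨u, rfl, hu⟩
    rw [← QuotientGroup.mk_zpow, QuotientGroup.eq] at hu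
    exact ⟨(g ^ i)⁻¹ * u, H.inv_mem_iff.mp (by simpa using hu), by simp⟩

theorem ne_zero_of_mem_coset [Fact p.Prime] {i : ℤ} {x : ZMod p} (hx : x ∈ coset p g H i) :
    x ≠ 0 := by
  obtain ⟨h, -, rfl⟩ := hx
  exact Units.ne_zero _

theorem coe_mem_coset_zero {u : (ZMod p)ˣ} (hu : u ∈ H) : (u : ZMod p) ∈ coset p g H 0 :=
  ⟨u, hu, by simp⟩

theorem mul_mem_coset {i j : ℤ} {x y : ZMod p} (hx : x ∈ coset p g H i)
    (hy : y ∈ coset p g H j) : x * y ∈ coset p g H (i + j) := by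
  obtain ⟨u, rfl, hu⟩ := mem_coset_iff.mp hx
  obtain ⟨v, rfl, hv⟩ := mem_coset_iff.mp hy
  exact mem_coset_iff.mpr ⟨u * v, rfl, by rw [QuotientGroup.mk_mul, hu, hv, zpow_add]⟩

theorem mem_coset_of_mul_mem {i j : ℤ} {x y : ZMod p} (hx : x ∈ coset p g H i)
    (hxy : x * y ∈ coset p g H (i + j)) : y ∈ coset p g H j := by
  obtain ⟨u, rfl, hu⟩ := mem_coset_iff.mp hx
  obtain ⟨w, hw, hw'⟩ := mem_coset_iff.mp hxy
  refine mem_coset_iff.mpr ⟨u⁻¹ * w, by simp [hw], ?_⟩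
  rw [QuotientGroup.mk_mul, QuotientGroup.mk_inv, hu, hw', zpow_add, inv_mul_cancel_left]

theorem unit_mul_mem_coset_iff {i : ℤ} {u : (ZMod p)ˣ} (hu : u ∈ H) {x : ZMod p} :
    (u : ZMod p) * x ∈ coset p g H i ↔ x ∈ coset p g H i := by
  have hu0 := coe_mem_coset_zero (g := g) hu
  constructor
  · intro h
    exact mem_coset_of_mul_mem hu0 (by rwa [zero_add])
  · intro h
    simpa using mul_mem_coset hu0 h

theorem modEq_index_of_mem_coset (hg : ∀ x : (ZMod p)ˣ, x ∈ Subgroup.zpowers g) {i j : ℤ}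
    {x : ZMod p} (hi : x ∈ coset p g H i) (hj : x ∈ coset p g H j) : i ≡ j [ZMOD H.index] := by
  obtain ⟨u, rfl, hu⟩ := mem_coset_iff.mp hi
  obtain ⟨v, hv, hv'⟩ := mem_coset_iff.mp hj
  rw [← orderOf_mk_eq_index hg, ← zpow_eq_zpow_iff_modEq, ← hu, ← hv', Units.ext hv]

theorem exists_mem_coset [Fact p.Prime] (hg : ∀ x : (ZMod p)ˣ, x ∈ Subgroup.zpowers g)
    {x : ZMod p} (hx : x ≠ 0) : ∃ i < H.index, x ∈ coset p g H i := by
  classical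
  obtain ⟨u, rfl⟩ := isUnit_iff_ne_zero.mpr hx
  have hu : (u : (ZMod p)ˣ ⧸ H) ∈ Subgroup.zpowers (g : (ZMod p)ˣ ⧸ H) := by
    obtain ⟨n, rfl⟩ := hg u
    exact ⟨n, (QuotientGroup.mk_zpow H g n).symm⟩
  obtain ⟨i, hi, hgi⟩ := mem_image.mp (mem_zpowers_iff_mem_range_orderOf.mp hu)
  rw [mem_range, orderOf_mk_eq_index hg] at hi
  exact ⟨i, hi, mem_coset_iff.mpr ⟨u, rfl, by rw [← hgi, zpow_natCast]⟩⟩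

theorem cyc_eq_ncard_coset_inter (i k : ℤ) :
    cyc p g H i (k - i) = (coset p g H i ∩ {x | x * (1 + x) ∈ coset p g H k}).ncard := by
  rw [cyc, ← Set.image_inter_preimage, Set.ncard_image_of_injective _ (add_right_injective 1)]
  congr 1
  ext x
  refine and_congr_right fun hx => ⟨fun h => ?_, fun h => ?_⟩
  · simpa using mul_mem_coset hx h
  · exact mem_coset_of_mul_mem hx (by rwa [add_sub_cancel])

end Coset

section Partition

variable {p : ℕ} [Fact p.Prime] {g : (ZMod p)ˣ} {H : Subgroup (ZMod p)ˣ}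

theorem sum_ncard_coset_inter (hg : ∀ x : (ZMod p)ˣ, x ∈ Subgroup.zpowers g) {S : Set (ZMod p)}
    (hS : 0 ∉ S) : ∑ i ∈ range H.index, (coset p g H i ∩ S).ncard = S.ncard := by
  have hdisj : ((range H.index : Finset ℕ) : Set ℕ).PairwiseDisjoint
      fun i : ℕ => coset p g H i ∩ S := by
    intro i hi j hj hij
    refine Set.disjoint_left.mpr fun x hxi hxj => hij ?_
    exact (Int.natCast_modEq_iff.mp (modEq_index_of_mem_coset hg hxi.1 hxj.1)).eq_of_lt_of_lt
      (mem_range.mp hi) (mem_range.mp hj)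
  have hcover : S = ⋃ i ∈ ((range H.index : Finset ℕ) : Set ℕ), coset p g H i ∩ S := by
    ext x
    simp only [coe_range, Set.mem_iUnion, Set.mem_Iio, Set.mem_inter_iff, exists_prop]
    refine ⟨fun hx => ?_, fun ⟨_, _, _, hx⟩ => hx⟩
    obtain ⟨i, hi, hxi⟩ := exists_mem_coset hg (H := H) (fun h => hS (h ▸ hx))
    exact ⟨i, hi, hxi, hx⟩
  conv_rhs => rw [hcover]
  rw [Set.Finite.ncard_biUnion (finite_toSet _) (fun _ _ => Set.toFinite _) hdisj,
    finsum_mem_coe_finset]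

theorem neg_one_notMem_coset (hg : ∀ x : (ZMod p)ˣ, x ∈ Subgroup.zpowers g)
    (hneg : (-1 : (ZMod p)ˣ) ∈ H) {k : ℕ} (hk1 : 1 ≤ k) (hk2 : k < H.index) :
    -1 ∉ coset p g H k := by
  intro h
  have hdvd := (modEq_index_of_mem_coset hg (coe_mem_coset_zero hneg) (by simpa using h)).dvd
  rw [sub_zero, Int.natCast_dvd_natCast] at hdvd
  have := Nat.le_of_dvd (by omega) hdvd
  omega

end Partition

theorem stmt_8_general (p : ℕ) [Fact p.Prime]
    (H : Subgroup (ZMod p)ˣ) (ℓ : ℕ) (hℓ : H.index = ℓ)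
    (hneg : (-1 : (ZMod p)ˣ) ∈ H) (h2 : ∃ u : (ZMod p)ˣ, (u : ZMod p) = 2 ∧ u ∈ H)
    (g : (ZMod p)ˣ) (hg : ∀ x : (ZMod p)ˣ, x ∈ Subgroup.zpowers g)
    (k : ℕ) (hk1 : 1 ≤ k) (hk2 : k ≤ ℓ - 1) :
    2 * ({x ∈ (fun x => 1 + x) '' coset p g H (k : ℤ) | IsSquare x}).ncard
      = ∑ i ∈ Finset.range ℓ, cyc p g H (i : ℤ) ((k : ℤ) - (i : ℤ)) := by
  subst hℓ
  obtain ⟨u, hu2, huH⟩ := h2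
  have h2 : (2 : ZMod p) ≠ 0 := hu2 ▸ u.ne_zero
  have h4 : ∀ x, 4 * x ∈ coset p g H k ↔ x ∈ coset p g H k := fun x => by
    rw [show (4 : ZMod p) = ((u * u : (ZMod p)ˣ) : ZMod p) by rw [Units.val_mul, hu2]; norm_num]
    exact unit_mul_mem_coset_iff (H.mul_mem huH huH)
  have hsq : (0 : ZMod p) ∉ (fun y => 1 + y) '' coset p g H k := fun ⟨y, hy, hy0⟩ =>
    neg_one_notMem_coset hg hneg hk1 (by omega) (by rwa [← eq_neg_of_add_eq_zero_right hy0])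
  have hT : (0 : ZMod p) ∉ {x | x * (1 + x) ∈ coset p g H k} := fun h =>
    ne_zero_of_mem_coset h (zero_mul _)
  rw [sum_congr rfl fun (i : ℕ) _ => cyc_eq_ncard_coset_inter i k, sum_ncard_coset_inter hg hT,
    ncard_mul_one_add_mem_eq_ncard_sq_mem h2 h4, ncard_sq_mem_eq_two_mul h2 hsq]

theorem stmt_8 (p : ℕ) [Fact p.Prime] (hodd : Odd p)
    (H : Subgroup (ZMod p)ˣ) (ℓ : ℕ) (hℓ : H.index = ℓ) (hℓ3 : 3 ≤ ℓ)
    (hneg : (-1 : (ZMod p)ˣ) ∈ H) (h2 : ∃ u : (ZMod p)ˣ, (u : ZMod p) = 2 ∧ u ∈ H)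
    (g : (ZMod p)ˣ) (hg : ∀ x : (ZMod p)ˣ, x ∈ Subgroup.zpowers g)
    (k : ℕ) (hk1 : 1 ≤ k) (hk2 : k ≤ ℓ - 1) :
    2 * ({x ∈ (fun x => 1 + x) '' coset p g H (k : ℤ) | IsSquare x}).ncard
      = ∑ i ∈ Finset.range ℓ, cyc p g H (i : ℤ) ((k : ℤ) - (i : ℤ)) :=
  stmt_8_general p H ℓ hℓ hneg h2 g hg k hk1 hk2
end

section
/- Let p be an odd prime and H a subgroup of (Z/pZ)^× with −1 ∈ H. Then the number of squares in the set 1 + H = {1 + h : h ∈ H} is strictly greater than |H|/4. (In fact it is at least |H|/4 + 1/2.) -/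
private lemma nonsq_mul_nonsq {p : ℕ} [Fact p.Prime] (hodd : Odd p) {a b : ZMod p}
    (ha0 : a ≠ 0) (hb0 : b ≠ 0) (ha : ¬IsSquare a) (hb : ¬IsSquare b) :
    IsSquare (a * b) := by
  classical
  have hab : a * b ≠ 0 := mul_ne_zero ha0 hb0
  have h1 : quadraticChar (ZMod p) a = -1 :=
    quadraticChar_neg_one_iff_not_isSquare.mpr ha
  have h2 : quadraticChar (ZMod p) b = -1 :=
    quadraticChar_neg_one_iff_not_isSquare.mpr hb
  have : quadraticChar (ZMod p) (a * b) = 1 := by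
    rw [map_mul, h1, h2]; ring
  exact (quadraticChar_one_iff_isSquare hab).mp this

theorem stmt_10 (p : ℕ) [Fact p.Prime] (hodd : Odd p)
    (H : Subgroup (ZMod p)ˣ) (hneg : (-1 : (ZMod p)ˣ) ∈ H) :
    4 * ({x ∈ (fun h : (ZMod p)ˣ => 1 + (h : ZMod p)) '' (H : Set (ZMod p)ˣ) |
            IsSquare x}).ncard
      > Nat.card H := by
  classical
  have hp : p.Prime := Fact.out
  have hp2 : p ≠ 2 := by rintro rfl; exact (Nat.not_odd_iff_even.mpr (by decide)) hodd
  have hp3 : 2 < p := lt_of_le_of_ne hp.two_le (Ne.symm hp2)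
  haveI : Fact (2 < p) := ⟨hp3⟩
  have hone : (1 : (ZMod p)ˣ) ≠ -1 := by
    intro h
    apply ZMod.neg_one_ne_one (n := p)
    have := congrArg (Units.val) h
    simpa using this.symm
  set f : (ZMod p)ˣ → ZMod p := fun h => 1 + (h : ZMod p) with hf
  have hfinj : Function.Injective f := by
    intro a b hab
    simp only [f, add_right_injective] at hab
    exact Units.ext (by exact add_left_cancel hab)
  set goodF : Finset (ZMod p)ˣ :=
    Finset.univ.filter (fun h => h ∈ H ∧ IsSquare (f h)) with hgoodF
  have himg : {x ∈ f '' (H : Set (ZMod p)ˣ) | IsSquare x} = f '' (goodF : Set (ZMod p)ˣ) := by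
    ext x
    simp only [Set.mem_setOf_eq, Set.mem_image, Finset.coe_filter, hgoodF,
      Finset.mem_univ, true_and, SetLike.mem_coe, Set.mem_setOf_eq]
    constructor
    · rintro ⟨⟨h, hh, rfl⟩, hsq⟩; exact ⟨h, ⟨hh, hsq⟩, rfl⟩
    · rintro ⟨h, ⟨hh, hsq⟩, rfl⟩; exact ⟨⟨h, hh, rfl⟩, hsq⟩
  rw [himg, Set.ncard_image_of_injective _ hfinj, Set.ncard_coe_finset]
  have hcardH : Nat.card H = (Finset.univ.filter (· ∈ H)).card := by
    rw [Nat.card_eq_fintype_card]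
    exact (Fintype.card_subtype _)
  rw [hcardH]
  set HF : Finset (ZMod p)ˣ := Finset.univ.filter (· ∈ H) with hHF
  have hmemHF : ∀ h : (ZMod p)ˣ, h ∈ HF ↔ h ∈ H := by
    intro h; simp [hHF]
  -- -1 is good
  have hneg_good : (-1 : (ZMod p)ˣ) ∈ goodF := by
    simp only [hgoodF, Finset.mem_filter, Finset.mem_univ, true_and]
    refine ⟨hneg, ?_⟩
    have : f (-1) = 0 := by simp [hf]
    rw [this]; exact ⟨0, (mul_zero 0).symm⟩
  set D : Finset (ZMod p)ˣ := (HF.erase 1).erase (-1) with hD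
  set g : (ZMod p)ˣ → (ZMod p)ˣ := fun h =>
    if IsSquare (1 + (h : ZMod p)) then h
    else if IsSquare (1 - (h : ZMod p)) then -h else -(h ^ 2) with hg
  have hDmem : ∀ h ∈ D, h ∈ H ∧ h ≠ 1 ∧ h ≠ -1 := by
    intro h hh
    simp only [hD, Finset.mem_erase, hmemHF] at hh
    exact ⟨hh.2.2, hh.2.1, hh.1⟩
  -- g maps D into goodF.erase (-1)
  have hmaps : ∀ h ∈ D, g h ∈ goodF.erase (-1) := by
    intro h hh
    obtain ⟨hH, h1, hm1⟩ := hDmem h hh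
    have hv1 : (h : ZMod p) ≠ 1 := fun e => h1 (Units.ext (by simpa using e))
    have hvm1 : (h : ZMod p) ≠ -1 := fun e => hm1 (Units.ext (by simpa using e))
    have ha0 : (1 : ZMod p) + h ≠ 0 := by
      intro e; exact hvm1 (by linear_combination e)
    have hb0 : (1 : ZMod p) - h ≠ 0 := by
      intro e; exact hv1 (by linear_combination -e)
    simp only [Finset.mem_erase, hgoodF, Finset.mem_filter, Finset.mem_univ, true_and]
    by_cases c1 : IsSquare (1 + (h : ZMod p))
    · have : g h = h := by simp [hg, c1]
      rw [this]; exact ⟨hm1, hH, c1⟩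
    · by_cases c2 : IsSquare (1 - (h : ZMod p))
      · have hgh2 : g h = -h := by simp [hg, c1, c2]
        rw [hgh2]
        refine ⟨fun e => h1 (by simpa using neg_injective e), ?_, ?_⟩
        · have e2 : -h = -1 * h := by rw [neg_one_mul]
          rw [e2]; exact H.mul_mem hneg hH
        · have hval : f (-h) = 1 - (h : ZMod p) := by
            simp only [hf, Units.val_neg]; ring
          rw [hval]; exact c2
      · have hgh : g h = -(h ^ 2) := by simp [hg, c1, c2]
        rw [hgh]
        have hsq_ne : (h : (ZMod p)ˣ) ^ 2 ≠ 1 := by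
          intro e
          have e' : ((h : ZMod p)) * h = 1 := by
            have := congrArg (Units.val) e
            simpa [pow_two] using this
          rcases mul_self_eq_one_iff.mp e' with e2 | e2
          · exact hv1 e2
          · exact hvm1 e2
        refine ⟨fun e => hsq_ne (by simpa using neg_injective e), ?_, ?_⟩
        · have e2 : -(h ^ 2) = -1 * (h * h) := by rw [sq, neg_one_mul]
          rw [e2]; exact H.mul_mem hneg (H.mul_mem hH hH)
        · have hval : f (-(h ^ 2)) = (1 + (h : ZMod p)) * (1 - (h : ZMod p)) := by
            simp only [hf, Units.val_neg, Units.val_pow_eq_pow_val]; ring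
          rw [hval]
          exact nonsq_mul_nonsq hodd ha0 hb0 c1 c2
  -- fibers of g have at most 4 elements
  have hfiber : ∀ v ∈ goodF.erase (-1), (D.filter (fun h => g h = v)).card ≤ 4 := by
    intro v _
    by_cases hex : ∃ a : (ZMod p)ˣ, a ^ 2 = -v
    · obtain ⟨a, ha⟩ := hex
      have hsub : D.filter (fun h => g h = v) ⊆ {v, -v, a, -a} := by
        intro h hh
        simp only [Finset.mem_filter] at hh
        obtain ⟨-, hgh⟩ := hh
        simp only [Finset.mem_insert, Finset.mem_singleton]
        by_cases c1 : IsSquare (1 + (h : ZMod p))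
        · left; rw [hg] at hgh; simpa [c1] using hgh
        · by_cases c2 : IsSquare (1 - (h : ZMod p))
          · right; left; rw [hg] at hgh; simp [c1, c2] at hgh; rw [← hgh]; simp
          · have hh2 : h ^ 2 = -v := by
              rw [hg] at hgh; simp [c1, c2] at hgh; rw [← hgh]; simp
            have : (h : ZMod p) * h = (a : ZMod p) * a := by
              have := congrArg (Units.val) (hh2.trans ha.symm)
              simpa [pow_two] using this
            rcases mul_self_eq_mul_self_iff.mp this with e | e
            · right; right; left; exact Units.ext e
            · right; right; right; exact Units.ext (by simpa using e)
      calc (D.filter (fun h => g h = v)).card ≤ ({v, -v, a, -a} : Finset _).card :=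
            Finset.card_le_card hsub
        _ ≤ 4 := by
            apply le_trans (Finset.card_insert_le _ _)
            apply Nat.succ_le_succ
            apply le_trans (Finset.card_insert_le _ _)
            apply Nat.succ_le_succ
            apply le_trans (Finset.card_insert_le _ _)
            simp
    · have hsub : D.filter (fun h => g h = v) ⊆ {v, -v} := by
        intro h hh
        simp only [Finset.mem_filter] at hh
        obtain ⟨-, hgh⟩ := hh
        simp only [Finset.mem_insert, Finset.mem_singleton]
        by_cases c1 : IsSquare (1 + (h : ZMod p))
        · left; rw [hg] at hgh; simpa [c1] using hgh
        · by_cases c2 : IsSquare (1 - (h : ZMod p))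
          · right; rw [hg] at hgh; simp [c1, c2] at hgh; rw [← hgh]; simp
          · exfalso
            apply hex
            refine ⟨h, ?_⟩
            rw [hg] at hgh; simp [c1, c2] at hgh; rw [← hgh]; simp
      calc (D.filter (fun h => g h = v)).card ≤ ({v, -v} : Finset _).card :=
            Finset.card_le_card hsub
        _ ≤ 4 := le_trans (Finset.card_insert_le _ _) (by simp)
  have hmain : D.card ≤ 4 * (goodF.erase (-1)).card :=
    Finset.card_le_mul_card_image_of_maps_to hmaps 4 hfiber
  -- card computations
  have h1HF : (1 : (ZMod p)ˣ) ∈ HF := (hmemHF 1).mpr H.one_mem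
  have hm1HF : (-1 : (ZMod p)ˣ) ∈ HF.erase 1 :=
    Finset.mem_erase.mpr ⟨Ne.symm hone, (hmemHF _).mpr hneg⟩
  have hDcard : D.card = HF.card - 2 := by
    rw [hD, Finset.card_erase_of_mem hm1HF, Finset.card_erase_of_mem h1HF]
    omega
  have hErCard : (goodF.erase (-1)).card = goodF.card - 1 :=
    Finset.card_erase_of_mem hneg_good
  have hgood1 : 1 ≤ goodF.card := Finset.card_pos.mpr ⟨-1, hneg_good⟩
  have hHF2 : 2 ≤ HF.card := by
    have : ({1, -1} : Finset (ZMod p)ˣ) ⊆ HF := by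
      intro x hx
      simp only [Finset.mem_insert, Finset.mem_singleton] at hx
      rcases hx with rfl | rfl
      · exact h1HF
      · exact Finset.mem_of_mem_erase hm1HF
    calc 2 = ({1, -1} : Finset (ZMod p)ˣ).card := by
            rw [Finset.card_insert_of_notMem (by simpa using hone), Finset.card_singleton]
      _ ≤ HF.card := Finset.card_le_card this
  rw [hDcard, hErCard] at hmain
  omega
end

section
/- Let p be an odd prime, L = ⟨−1,2⟩ ≤ (Z/pZ)^×, and suppose ℓ = [(Z/pZ)^× : L] is an odd prime. Fix a primitive root g of Z/pZ and set A(i,j) = |(1 + g^i L) ∩ g^j L|. Then the number of squares in 1 + L equals (1/2)(1 + A(0,0) + Σ_{1 ≤ i ≤ ℓ−1} A(i, 2i)). -/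
/-! The squares in `1 + L` are the `y ^ 2` with `y ^ 2 - 1 ∈ L`. Each nonzero one has two square
roots and `0 = 1 + (-1)` has one, so twice their number is `1 + #{y | y ^ 2 - 1 ∈ L}`. The
substitution `y = 1 + 2 / t`, for which `y ^ 2 - 1 = 4 t⁻² (1 + t)` with `4 ∈ L`, turns this set
into `{t | 1 + t ∈ t ^ 2 L}`. Sorting its elements by their coset `g ^ i L`, `0 ≤ i < ℓ`, whose
square is `g ^ (2 i) L`, counts it as `∑ i, A(i, 2 i)`. -/

open scoped Pointwise

open Finset in
theorem card_sqrts_add_ite {F : Type*} [Field F] [Fintype F] [DecidableEq F]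
    (hF : ringChar F ≠ 2) (a : F) :
    #{y | y ^ 2 = a} + (if a = 0 then 1 else 0) = if IsSquare a then 2 else 0 := by
  have h := quadraticChar_card_sqrts hF a
  rw [Set.toFinset_ofPred] at h
  by_cases ha : a = 0
  · simp only [ha, quadraticChar_zero, if_true, IsSquare.zero] at h ⊢
    omega
  by_cases hsq : IsSquare a
  · rw [(quadraticChar_one_iff_isSquare ha).mpr hsq] at h
    simp only [ha, hsq, if_true, if_false]
    omega
  · rw [quadraticChar_neg_one_iff_not_isSquare.mpr hsq] at h
    simp only [ha, hsq, if_false]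
    omega

open Finset in
theorem two_mul_ncard_sep_isSquare {F : Type*} [Field F] [Fintype F] [DecidableEq F]
    (hF : ringChar F ≠ 2) {B : Set F} (hB : 0 ∈ B) :
    2 * {x ∈ B | IsSquare x}.ncard = {y | y ^ 2 ∈ B}.ncard + 1 := by
  classical
  have hfib : #{y | y ^ 2 ∈ B.toFinset} = ∑ a ∈ B.toFinset, #{y | y ^ 2 = a} := by
    rw [card_eq_sum_card_fiberwise (f := (· ^ 2)) (t := B.toFinset) (fun y hy => by simpa using hy)]
    refine sum_congr rfl fun a ha => ?_
    rw [filter_filter]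
    exact congrArg card (filter_congr fun y _ => ⟨fun h => h.2, fun h => ⟨h ▸ ha, h⟩⟩)
  have hzero : ∑ a ∈ B.toFinset, (if a = 0 then 1 else 0) = 1 := by
    simp [hB]
  calc 2 * {x ∈ B | IsSquare x}.ncard
      = ∑ a ∈ B.toFinset, if IsSquare a then 2 else 0 := by
        rw [sum_ite, sum_const_zero, sum_const, smul_eq_mul, add_zero, mul_comm,
          ← Set.ncard_coe_finset]
        congr 2; ext; simp
    _ = ∑ a ∈ B.toFinset, (#{y | y ^ 2 = a} + if a = 0 then 1 else 0) :=
        sum_congr rfl fun a _ => (card_sqrts_add_ite hF a).symm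
    _ = {y | y ^ 2 ∈ B}.ncard + 1 := by
        rw [sum_add_distrib, hzero, ← hfib, ← Set.ncard_coe_finset]
        congr 2; ext; simp

theorem Units.mem_image_val_smul_iff {M : Type*} [Monoid M] {S : Set Mˣ} {a : Mˣ} {x : M} :
    x ∈ Units.val '' (a • S) ↔ ↑a⁻¹ * x ∈ Units.val '' S := by
  constructor
  · rintro ⟨_, ⟨s, hs, rfl⟩, rfl⟩
    exact ⟨s, hs, by simp⟩
  · rintro ⟨s, hs, h⟩
    exact ⟨a • s, Set.smul_mem_smul_set hs, by simp [h]⟩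

theorem ncard_sq_mem_one_add_eq {K : Type*} [Field K] {L : Subgroup Kˣ} {u : Kˣ}
    (hu : (u : K) = 2) (huL : u ∈ L) :
    {y : K | y ^ 2 ∈ (fun h : Kˣ => 1 + (h : K)) '' L}.ncard
      = {t : Kˣ | 1 + (t : K) ∈ Units.val '' (t ^ 2 • (L : Set Kˣ))}.ncard := by
  have h2 : (2 : K) ≠ 0 := hu ▸ u.ne_zero
  symm
  refine Set.ncard_congr (fun t _ => 1 + 2 * (t : K)⁻¹) ?_ ?_ ?_
  · rintro t ht
    obtain ⟨h, hL, hh⟩ := Units.mem_image_val_smul_iff.mp ht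
    refine ⟨u * u * h, mul_mem (mul_mem huL huL) hL, ?_⟩
    simp only [Units.val_mul, hh, hu, Units.val_inv_eq_inv_val, Units.val_pow_eq_pow_val]
    field_simp
    ring
  · intro t t' _ _ h
    exact Units.ext (by simpa [h2] using h)
  · rintro y ⟨h, hL, hh⟩
    simp only at hh
    have hy : y - 1 ≠ 0 := fun hy => h.ne_zero (by linear_combination hh + (y + 1) * hy)
    refine ⟨u * (Units.mk0 _ hy)⁻¹, Units.mem_image_val_smul_iff.mpr ?_, ?_⟩
    · refine ⟨u⁻¹ * u⁻¹ * h, mul_mem (mul_mem (inv_mem huL) (inv_mem huL)) hL, ?_⟩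
      simp only [Units.val_mul, hu, Units.val_inv_eq_inv_val, Units.val_pow_eq_pow_val,
        Units.val_mk0]
      field_simp
      linear_combination hh
    · simp only [Units.val_mul, hu, Units.val_inv_eq_inv_val, Units.val_mk0]
      field_simp
      ring

open Finset in
theorem sum_range_orderOf_pow_of_forall_mem_zpowers {G M : Type*} [Group G] [Fintype G]
    [AddCommMonoid M] {c : G} (hc : ∀ x, x ∈ Subgroup.zpowers c) (f : G → M) :
    ∑ i ∈ range (orderOf c), f (c ^ i) = ∑ x, f x := by
  classical
  rw [← sum_image fun i hi j hj => pow_injOn_Iio_orderOf (by simpa using hi) (by simpa using hj)]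
  refine sum_congr (eq_univ_of_forall fun x => ?_) fun _ _ => rfl
  rw [← mem_powers_iff_mem_range_orderOf, mem_powers_iff_mem_zpowers]
  exact hc x

theorem mem_zpow_smul_iff_mk_eq {G : Type*} [CommGroup G] {H : Subgroup G} {g t : G} {i : ℤ} :
    t ∈ g ^ i • (H : Set G) ↔ (t : G ⧸ H) = (g : G ⧸ H) ^ i := by
  rw [mem_leftCoset_iff, SetLike.mem_coe, ← QuotientGroup.eq, QuotientGroup.mk_zpow, eq_comm]

theorem leftCoset_eq_iff_mk_eq {G : Type*} [CommGroup G] {H : Subgroup G} {a b : G} :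
    a • (H : Set G) = b • H ↔ (a : G ⧸ H) = b := by
  rw [leftCoset_eq_iff, QuotientGroup.eq]

theorem coset_eq_image_smul (p : ℕ) (g : (ZMod p)ˣ) (H : Subgroup (ZMod p)ˣ) (i : ℤ) :
    coset p g H i = Units.val '' (g ^ i • (H : Set (ZMod p)ˣ)) := by
  rw [coset, ← Set.image_smul, Set.image_image]
  rfl

theorem cyc_eq_ncard (p : ℕ) (g : (ZMod p)ˣ) (H : Subgroup (ZMod p)ˣ) (i j : ℤ) :
    cyc p g H i j = {t : (ZMod p)ˣ | (t : (ZMod p)ˣ ⧸ H) = (g : (ZMod p)ˣ ⧸ H) ^ i ∧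
      1 + (t : ZMod p) ∈ coset p g H j}.ncard := by
  rw [cyc, ← Set.image_inter_preimage, Set.ncard_image_of_injective _ (add_right_injective 1),
    coset_eq_image_smul p g H i, ← Set.image_inter_preimage,
    Set.ncard_image_of_injective _ Units.val_injective]
  congr 1
  ext t
  simp only [Set.mem_inter_iff, Set.mem_preimage, Set.mem_ofPred_eq, mem_zpow_smul_iff_mk_eq]

open Finset in
theorem ncard_one_add_mem_sq_smul_eq_sum_cyc {p : ℕ} [NeZero p] (L : Subgroup (ZMod p)ˣ)
    {g : (ZMod p)ˣ} (hg : ∀ x, x ∈ Subgroup.zpowers g) :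
    {t : (ZMod p)ˣ | 1 + (t : ZMod p) ∈ Units.val '' (t ^ 2 • (L : Set (ZMod p)ˣ))}.ncard
      = ∑ i ∈ range L.index, cyc p g L i (2 * i) := by
  classical
  set c : (ZMod p)ˣ ⧸ L := QuotientGroup.mk g
  have hc : ∀ x, x ∈ Subgroup.zpowers c := by
    rintro ⟨x⟩
    obtain ⟨n, rfl⟩ := Subgroup.mem_zpowers_iff.mp (hg x)
    exact ⟨n, (QuotientGroup.mk_zpow L g n).symm⟩
  have hcL : orderOf c = L.index := orderOf_eq_card_of_forall_mem_zpowers hc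
  have hcoset : ∀ (i : ℕ) (t : (ZMod p)ˣ), (t : (ZMod p)ˣ ⧸ L) = c ^ i →
      t ^ 2 • (L : Set (ZMod p)ˣ) = g ^ (2 * (i : ℤ)) • (L : Set (ZMod p)ˣ) := by
    intro i t ht
    rw [leftCoset_eq_iff_mk_eq, QuotientGroup.mk_pow, ht, QuotientGroup.mk_zpow, ← pow_mul,
      mul_comm, ← zpow_natCast, Nat.cast_mul, Nat.cast_ofNat]
  rw [Set.ncard_eq_toFinset_card', card_eq_sum_card_fiberwise (f := QuotientGroup.mk (s := L))
    (t := univ) fun _ _ => mem_univ _, ← sum_range_orderOf_pow_of_forall_mem_zpowers hc, hcL]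
  refine sum_congr rfl fun i _ => ?_
  rw [cyc_eq_ncard, ← Set.ncard_coe_finset]
  congr 1
  ext t
  simp only [coe_filter, Set.mem_toFinset, Set.mem_ofPred_eq, zpow_natCast]
  refine and_comm.trans (and_congr_right fun ht => ?_)
  rw [hcoset i t ht, coset_eq_image_smul]

theorem stmt_12_general (p : ℕ) [Fact p.Prime]
    (u : (ZMod p)ˣ) (hu : (u : ZMod p) = 2)
    (L : Subgroup (ZMod p)ˣ) (hL : L = Subgroup.closure {-1, u})
    (ℓ : ℕ) (hℓ : L.index = ℓ)
    (g : (ZMod p)ˣ) (hg : ∀ x : (ZMod p)ˣ, x ∈ Subgroup.zpowers g) :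
    2 * ({x ∈ (fun h : (ZMod p)ˣ => 1 + (h : ZMod p)) '' (L : Set (ZMod p)ˣ) |
            IsSquare x}).ncard
      = 1 + cyc p g L 0 0 + ∑ i ∈ Finset.Icc 1 (ℓ - 1), cyc p g L (i : ℤ) (2 * (i : ℤ)) := by
  classical
  have hm1 : (-1 : (ZMod p)ˣ) ∈ L := hL ▸ Subgroup.subset_closure (by simp)
  have huL : u ∈ L := hL ▸ Subgroup.subset_closure (by simp)
  have hchar : ringChar (ZMod p) ≠ 2 := fun h =>
    u.ne_zero (by rw [hu, ← Nat.cast_ofNat, ← h, ringChar.Nat.cast_ringChar])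
  have h0 : (0 : ZMod p) ∈ (fun h : (ZMod p)ˣ => 1 + (h : ZMod p)) '' L := ⟨-1, hm1, by simp⟩
  have hℓ0 : ℓ ≠ 0 := hℓ ▸ L.index_ne_zero_of_finite
  have hrange : Finset.range ℓ = insert 0 (Finset.Icc 1 (ℓ - 1)) := by
    ext i
    simp only [Finset.mem_range, Finset.mem_insert, Finset.mem_Icc]
    omega
  rw [two_mul_ncard_sep_isSquare hchar h0, ncard_sq_mem_one_add_eq hu huL,
    ncard_one_add_mem_sq_smul_eq_sum_cyc L hg, hℓ, hrange, Finset.sum_insert (by simp)]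
  simp only [Nat.cast_zero, mul_zero]
  omega

theorem stmt_12 (p : ℕ) [Fact p.Prime] (hodd : Odd p)
    (u : (ZMod p)ˣ) (hu : (u : ZMod p) = 2)
    (L : Subgroup (ZMod p)ˣ) (hL : L = Subgroup.closure {-1, u})
    (ℓ : ℕ) (hℓ : L.index = ℓ) (hℓp : ℓ.Prime) (hℓodd : Odd ℓ)
    (g : (ZMod p)ˣ) (hg : ∀ x : (ZMod p)ˣ, x ∈ Subgroup.zpowers g) :
    2 * ({x ∈ (fun h : (ZMod p)ˣ => 1 + (h : ZMod p)) '' (L : Set (ZMod p)ˣ) |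
            IsSquare x}).ncard
      = 1 + cyc p g L 0 0 + ∑ i ∈ Finset.Icc 1 (ℓ - 1), cyc p g L (i : ℤ) (2 * (i : ℤ)) :=
  stmt_12_general p u hu L hL ℓ hℓ g hg
end

section
/- Let p be an odd prime, L = ⟨−1,2⟩ ≤ (Z/pZ)^×, and g a primitive root mod p. If ℓ = [(Z/pZ)^× : L] is an odd prime, then there exists i with 1 ≤ i ≤ ℓ−1 (so gcd(i,ℓ) = 1) such that (1 + g^i L) ∩ g^{2i} L ≠ ∅, i.e., A(i, 2i) ≠ 0. -/
/-!
Suppose every `A(i, 2i)` with `1 ≤ i < ℓ` vanishes. For `z ≠ 0` put `x = z⁻¹`: if `z ∉ L` then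
`x ∈ g^i L` for some `1 ≤ i < ℓ`, and `1 + x = z (z + 1) x²`, so `z (z + 1) ∉ L`. Hence
`z (z + 1) ∈ L` forces `z, z + 1 ∈ L`, and then also `(t² - 1) / t ∈ L` forces
`t - 1, t, t + 1 ∈ L`.

Counting the roots of `z² + z - v` and `t² - v t - 1` (`v ∈ L`) with the quadratic character `η`,
and using that `v ↦ (16 v)⁻¹` permutes `L` while square roots of elements of `L` stay in `L`
(odd index), gives `2 #{z | z (z + 1) ∈ L} = |L| + #{t | (t² - 1) / t ∈ L}`, that is
`2 #{t | t, t + 1 ∈ L} = |L| + #{t | t - 1, t, t + 1 ∈ L}`. As `2 ∈ L`, also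
`#{t | t, t + 2 ∈ L} = #{t | t, t + 1 ∈ L}`, and comparing the two counts shows that no element
of `L` is followed by two non-elements. In `ℤ/p` every non-element is then preceded by an
element, so `p ≤ 2 |L|`, whereas `|L| = (p - 1) / ℓ ≤ (p - 1) / 3`.
-/

open Finset

section ValFinset

variable {F : Type*} [Field F] [Fintype F] (L : Subgroup Fˣ)

open Classical in
noncomputable def valFinset : Finset F := {x | ∃ h ∈ L, (h : F) = x}

variable {L}

theorem mem_valFinset {x : F} : x ∈ valFinset L ↔ ∃ h ∈ L, (h : F) = x := by
  simp [valFinset]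

theorem coe_mem_valFinset {h : Fˣ} : (h : F) ∈ valFinset L ↔ h ∈ L :=
  mem_valFinset.trans ⟨fun ⟨_, hk, e⟩ => Units.ext e ▸ hk, fun hh => ⟨h, hh, rfl⟩⟩

theorem ne_zero_of_mem_valFinset {x : F} (hx : x ∈ valFinset L) : x ≠ 0 := by
  obtain ⟨h, -, rfl⟩ := mem_valFinset.mp hx
  exact h.ne_zero

theorem one_mem_valFinset : (1 : F) ∈ valFinset L :=
  coe_mem_valFinset.mpr L.one_mem

theorem mul_mem_valFinset {x y : F} (hx : x ∈ valFinset L) (hy : y ∈ valFinset L) :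
    x * y ∈ valFinset L := by
  obtain ⟨a, ha, rfl⟩ := mem_valFinset.mp hx
  obtain ⟨b, hb, rfl⟩ := mem_valFinset.mp hy
  exact coe_mem_valFinset.mpr (L.mul_mem ha hb)

theorem inv_mem_valFinset {x : F} (hx : x ∈ valFinset L) : x⁻¹ ∈ valFinset L := by
  obtain ⟨a, ha, rfl⟩ := mem_valFinset.mp hx
  rw [← Units.val_inv_eq_inv_val]
  exact coe_mem_valFinset.mpr (L.inv_mem ha)

theorem div_mem_valFinset {x y : F} (hx : x ∈ valFinset L) (hy : y ∈ valFinset L) :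
    x / y ∈ valFinset L := by
  simpa only [div_eq_mul_inv] using mul_mem_valFinset hx (inv_mem_valFinset hy)

theorem pow_mem_valFinset {x : F} (hx : x ∈ valFinset L) (n : ℕ) : x ^ n ∈ valFinset L := by
  induction n with
  | zero => simpa using one_mem_valFinset
  | succ n ih => simpa [pow_succ] using mul_mem_valFinset ih hx

/-- With `L.index = 2m + 1`, `y = y ^ L.index * (y ^ 2)⁻¹ ^ m`, and `y ^ L.index ∈ L`. -/
theorem mem_valFinset_of_sq_mem (hodd : Odd L.index) {x : F} (hx : x ≠ 0)
    (hsq : x ^ 2 ∈ valFinset L) : x ∈ valFinset L := by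
  obtain ⟨m, hm⟩ := hodd
  set y := Units.mk0 x hx
  have hy2 : y ^ 2 ∈ L := coe_mem_valFinset.mp (by simpa [y] using hsq)
  have hy : y = y ^ L.index * ((y ^ 2)⁻¹) ^ m := by
    rw [hm, inv_pow, ← pow_mul]; group
  have : y ∈ L := hy ▸ L.mul_mem (L.pow_index_mem y) (L.pow_mem (L.inv_mem hy2) m)
  exact coe_mem_valFinset.mpr this

theorem card_valFinset : #(valFinset L) = Nat.card L := by
  classical
  have : valFinset L = univ.map ⟨fun h : L => ((h : Fˣ) : F), fun a b e =>
      Subtype.ext (Units.ext e)⟩ := by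
    ext x
    simp only [mem_valFinset, mem_map, mem_univ, true_and, Subtype.exists]
    exact ⟨fun ⟨h, hh, e⟩ => ⟨h, hh, e⟩, fun ⟨h, hh, e⟩ => ⟨h, hh, e⟩⟩
  rw [this, card_map, card_univ, Nat.card_eq_fintype_card]

end ValFinset

theorem ringChar_ne_two_of_two_ne_zero {R : Type*} [Ring R] (h2 : (2 : R) ≠ 0) :
    ringChar R ≠ 2 := by
  intro h
  apply h2
  simpa [h] using ringChar.Nat.cast_ringChar (R := R)

section QuadraticCount

variable {F : Type*} [Field F] [Fintype F] [DecidableEq F]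

theorem card_sq_eq_quadraticChar_add_one (h2 : (2 : F) ≠ 0) (a : F) :
    (#{x : F | x ^ 2 = a} : ℤ) = quadraticChar F a + 1 := by
  simpa using quadraticChar_card_sqrts (ringChar_ne_two_of_two_ne_zero h2) a

/-- Completing the square: `z ↦ 2z + b` maps the roots onto the square roots of the
discriminant. -/
theorem card_sq_add_mul_add_eq_zero (h2 : (2 : F) ≠ 0) (b c : F) :
    (#{z : F | z ^ 2 + b * z + c = 0} : ℤ) = quadraticChar F (b ^ 2 - 4 * c) + 1 := by
  rw [← card_sq_eq_quadraticChar_add_one h2]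
  congr 1
  apply card_nbij' (fun z => 2 * z + b) (fun y => (y - b) / 2)
  · intro z hz
    simp only [coe_filter, mem_univ, true_and, Set.mem_ofPred_eq] at hz ⊢
    linear_combination 4 * hz
  · intro y hy
    simp only [coe_filter, mem_univ, true_and, Set.mem_ofPred_eq] at hy ⊢
    field_simp
    linear_combination hy
  · intro z _
    field_simp
    ring
  · intro y _
    field_simp
    ring

end QuadraticCount

section CyclotomicIdentity

variable {F : Type*} [Field F] [Fintype F] [DecidableEq F] {L : Subgroup Fˣ}

theorem card_mul_add_one_mem (h2 : (2 : F) ∈ valFinset L) :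
    (#{z : F | z * (z + 1) ∈ valFinset L} : ℤ) =
      ∑ v ∈ valFinset L, (quadraticChar F (1 + 4 * v) + 1) := by
  rw [card_eq_sum_card_fiberwise (s := {z : F | z * (z + 1) ∈ valFinset L})
    (f := fun z => z * (z + 1)) (t := valFinset L) (fun z hz => (mem_filter.mp hz).2)]
  push_cast
  refine sum_congr rfl fun v _ => ?_
  have hfiber : ({z : F | z * (z + 1) ∈ valFinset L} : Finset F).filter
      (fun z => z * (z + 1) = v) = ({z : F | z ^ 2 + 1 * z + -v = 0} : Finset F) := by
    ext z
    simp only [mem_filter, mem_univ, true_and]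
    constructor
    · rintro ⟨-, hz⟩
      linear_combination hz
    · intro hz
      have : z * (z + 1) = v := by linear_combination hz
      exact ⟨this ▸ ‹v ∈ valFinset L›, this⟩
  rw [hfiber, card_sq_add_mul_add_eq_zero (ne_zero_of_mem_valFinset h2)]
  ring_nf

theorem card_sq_sub_one_div_mem (h2 : (2 : F) ∈ valFinset L) :
    (#{t : F | (t ^ 2 - 1) / t ∈ valFinset L} : ℤ) =
      ∑ v ∈ valFinset L, (quadraticChar F (v ^ 2 + 4) + 1) := by
  rw [card_eq_sum_card_fiberwise (s := {t : F | (t ^ 2 - 1) / t ∈ valFinset L})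
    (f := fun t => (t ^ 2 - 1) / t) (t := valFinset L) (fun t ht => (mem_filter.mp ht).2)]
  push_cast
  refine sum_congr rfl fun v hv => ?_
  have hv0 := ne_zero_of_mem_valFinset hv
  have hfiber : ({t : F | (t ^ 2 - 1) / t ∈ valFinset L} : Finset F).filter
      (fun t => (t ^ 2 - 1) / t = v) = ({t : F | t ^ 2 + -v * t + -1 = 0} : Finset F) := by
    ext t
    simp only [mem_filter, mem_univ, true_and]
    constructor
    · rintro ⟨-, ht⟩
      have ht0 : t ≠ 0 := by rintro rfl; simp [eq_comm, hv0] at ht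
      field_simp at ht
      linear_combination ht
    · intro ht
      have ht0 : t ≠ 0 := by rintro rfl; norm_num at ht
      have : (t ^ 2 - 1) / t = v := by field_simp; linear_combination ht
      exact ⟨this ▸ hv, this⟩
  rw [hfiber, card_sq_add_mul_add_eq_zero (ne_zero_of_mem_valFinset h2)]
  ring_nf

/-- Reindex by the involution `v ↦ (16 v)⁻¹` of `L`, which turns `1 + 4v` into
`(1 + 4v) / 4v`. -/
theorem sum_quadraticChar_one_add_four_mul (h2 : (2 : F) ∈ valFinset L) :
    ∑ v ∈ valFinset L, quadraticChar F (1 + 4 * v) =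
      ∑ v ∈ valFinset L, quadraticChar F v * quadraticChar F (1 + 4 * v) := by
  have h2' := ne_zero_of_mem_valFinset h2
  have h16 : (16 : F) ∈ valFinset L := by
    simpa [show (2 : F) ^ 4 = 16 by norm_num] using pow_mem_valFinset h2 4
  have h16' := ne_zero_of_mem_valFinset h16
  have h8 : (8 : F) ≠ 0 := by simpa [show (2 : F) ^ 3 = 8 by norm_num] using pow_ne_zero 3 h2'
  refine sum_nbij' (fun v => (16 * v)⁻¹) (fun v => (16 * v)⁻¹)
    (fun v hv => inv_mem_valFinset (mul_mem_valFinset h16 hv))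
    (fun v hv => inv_mem_valFinset (mul_mem_valFinset h16 hv)) ?_ ?_ ?_
  all_goals intro v hv; have hv0 := ne_zero_of_mem_valFinset hv
  · field_simp
  · field_simp
  · rw [← map_mul, show (16 * v)⁻¹ * (1 + 4 * (16 * v)⁻¹) = (1 + 4 * v) * ((8 * v)⁻¹) ^ 2 by
      field_simp; ring, map_mul, quadraticChar_sq_one' (by simp [hv0, h8]), mul_one]

theorem sum_quadraticChar_one_add_four_mul_sq (h2 : (2 : F) ∈ valFinset L)
    (hodd : Odd L.index) :
    ∑ v ∈ valFinset L, quadraticChar F (1 + 4 * v ^ 2) =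
      ∑ u ∈ valFinset L, (quadraticChar F u + 1) * quadraticChar F (1 + 4 * u) := by
  have hsq : valFinset L = ({v : F | v ^ 2 ∈ valFinset L} : Finset F) := by
    ext v
    simp only [mem_filter, mem_univ, true_and]
    refine ⟨fun hv => pow_mem_valFinset hv 2, fun hv => mem_valFinset_of_sq_mem hodd ?_ hv⟩
    rintro rfl
    exact ne_zero_of_mem_valFinset hv (zero_pow two_ne_zero)
  calc ∑ v ∈ valFinset L, quadraticChar F (1 + 4 * v ^ 2)
      = ∑ v ∈ ({v : F | v ^ 2 ∈ valFinset L} : Finset F), quadraticChar F (1 + 4 * v ^ 2) := by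
        rw [← hsq]
    _ = ∑ u ∈ valFinset L, ∑ v ∈ ({v : F | v ^ 2 ∈ valFinset L} : Finset F) with v ^ 2 = u,
          quadraticChar F (1 + 4 * v ^ 2) :=
        (sum_fiberwise_of_maps_to (fun v hv => (mem_filter.mp hv).2) _).symm
    _ = _ := by
      refine sum_congr rfl fun u hu => ?_
      have hfiber : ({v : F | v ^ 2 ∈ valFinset L} : Finset F).filter (fun v => v ^ 2 = u) =
          ({v : F | v ^ 2 = u} : Finset F) := by
        ext v
        simp only [mem_filter, mem_univ, true_and, and_iff_right_iff_imp]
        exact fun hv => hv ▸ hu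
      rw [sum_congr rfl fun v hv => by rw [(mem_filter.mp hv).2], sum_const, hfiber,
        nsmul_eq_mul, card_sq_eq_quadraticChar_add_one (ne_zero_of_mem_valFinset h2)]

theorem sum_quadraticChar_sq_add_four :
    ∑ v ∈ valFinset L, quadraticChar F (v ^ 2 + 4) =
      ∑ v ∈ valFinset L, quadraticChar F (1 + 4 * v ^ 2) := by
  refine sum_nbij' (·⁻¹) (·⁻¹) (fun v hv => inv_mem_valFinset hv)
    (fun v hv => inv_mem_valFinset hv) (fun v _ => inv_inv v) (fun v _ => inv_inv v) ?_
  intro v hv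
  have hv0 := ne_zero_of_mem_valFinset hv
  rw [show v ^ 2 + 4 = (1 + 4 * v⁻¹ ^ 2) * v ^ 2 by field_simp, map_mul,
    quadraticChar_sq_one' hv0, mul_one]

theorem two_mul_card_mul_add_one_mem (h2 : (2 : F) ∈ valFinset L) (hodd : Odd L.index) :
    2 * #{z : F | z * (z + 1) ∈ valFinset L} =
      #(valFinset L) + #{t : F | (t ^ 2 - 1) / t ∈ valFinset L} := by
  have hA := sum_quadraticChar_one_add_four_mul h2
  have hB := sum_quadraticChar_one_add_four_mul_sq h2 hodd
  have hC := sum_quadraticChar_sq_add_four (L := L)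
  have hM := card_mul_add_one_mem h2
  have hT := card_sq_sub_one_div_mem h2
  simp only [sum_add_distrib, add_mul, one_mul, sum_const, nsmul_eq_mul, mul_one] at hB hM hT
  zify
  linear_combination 2 * hM - hT - hC - hB + hA

end CyclotomicIdentity

theorem card_filter_eq_card_filter_and_add_card_filter_and_not {α : Type*} [Fintype α]
    (P Q : α → Prop) [DecidablePred P] [DecidablePred Q] :
    #{a | P a} = #{a | P a ∧ Q a} + #{a | P a ∧ ¬Q a} := by
  rw [← card_filter_add_card_filter_not (s := {a | P a}) Q, filter_filter, filter_filter]

theorem add_two_mem_of_card_eq {R : Type*} [CommRing R] [Fintype R] [DecidableEq R]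
    {S : Finset R}
    (hcount : 2 * #{t | t ∈ S ∧ t + 1 ∈ S} = #S + #{t | t - 1 ∈ S ∧ t ∈ S ∧ t + 1 ∈ S})
    (hdouble : #{t | t ∈ S ∧ t + 2 ∈ S} = #{t | t ∈ S ∧ t + 1 ∈ S})
    {t : R} (ht : t ∈ S) (ht1 : t + 1 ∉ S) : t + 2 ∈ S := by
  have hshift :
      #{t | t - 1 ∈ S ∧ t ∈ S ∧ t + 1 ∈ S} = #{t | (t ∈ S ∧ t + 2 ∈ S) ∧ t + 1 ∈ S} := by
    refine card_nbij' (· - 1) (· + 1) (fun t ht => ?_) (fun t ht => ?_)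
      (fun _ _ => sub_add_cancel _ _) (fun _ _ => add_sub_cancel_right _ _) <;>
      simp only [coe_filter, mem_univ, true_and, Set.mem_ofPred_eq] at ht ⊢
    · rw [sub_add_cancel, show t - 1 + 2 = t + 1 by ring]
      exact ⟨⟨ht.1, ht.2.2⟩, ht.2.1⟩
    · rw [add_sub_cancel_right, add_assoc, one_add_one_eq_two]
      exact ⟨ht.1.1, ht.2, ht.1.2⟩
  have hS := card_filter_eq_card_filter_and_add_card_filter_and_not (· ∈ S) (· + 1 ∈ S)
  have h02 := card_filter_eq_card_filter_and_add_card_filter_and_not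
    (fun t => t ∈ S ∧ t + 2 ∈ S) (· + 1 ∈ S)
  have h0n1 := card_filter_eq_card_filter_and_add_card_filter_and_not
    (fun t => t ∈ S ∧ t + 1 ∉ S) (· + 2 ∈ S)
  have hempty : #{t | (t ∈ S ∧ t + 1 ∉ S) ∧ t + 2 ∉ S} = 0 := by
    have hswap : #{t | (t ∈ S ∧ t + 2 ∈ S) ∧ t + 1 ∉ S} =
        #{t | (t ∈ S ∧ t + 1 ∉ S) ∧ t + 2 ∈ S} := by
      simp only [and_right_comm]
    rw [filter_mem_eq_inter, univ_inter] at hS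
    omega
  by_contra ht2
  exact notMem_empty t (card_eq_zero.mp hempty ▸ mem_filter.mpr ⟨mem_univ t, ⟨ht, ht1⟩, ht2⟩)

section ConsecutiveProducts

variable {F : Type*} [Field F] [Fintype F] {L : Subgroup Fˣ}

theorem card_add_two_mem_eq [DecidableEq F] (h2 : (2 : F) ∈ valFinset L) :
    #{t : F | t ∈ valFinset L ∧ t + 2 ∈ valFinset L} =
      #{t : F | t ∈ valFinset L ∧ t + 1 ∈ valFinset L} := by
  have h2' := ne_zero_of_mem_valFinset h2
  refine card_nbij' (2⁻¹ * ·) (2 * ·) (fun t ht => ?_) (fun t ht => ?_)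
    (fun t _ => by field_simp) (fun t _ => by field_simp) <;>
    simp only [coe_filter, mem_univ, true_and, Set.mem_ofPred_eq] at ht ⊢
  · rw [show 2⁻¹ * t + 1 = 2⁻¹ * (t + 2) by field_simp]
    exact ⟨mul_mem_valFinset (inv_mem_valFinset h2) ht.1,
      mul_mem_valFinset (inv_mem_valFinset h2) ht.2⟩
  · rw [show 2 * t + 2 = 2 * (t + 1) by ring]
    exact ⟨mul_mem_valFinset h2 ht.1, mul_mem_valFinset h2 ht.2⟩

variable (hN : ∀ z : F, z * (z + 1) ∈ valFinset L → z ∈ valFinset L)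
include hN

theorem mul_add_one_mem_iff {z : F} :
    z * (z + 1) ∈ valFinset L ↔ z ∈ valFinset L ∧ z + 1 ∈ valFinset L := by
  refine ⟨fun hz => ⟨hN z hz, ?_⟩, fun hz => mul_mem_valFinset hz.1 hz.2⟩
  have hz0 := ne_zero_of_mem_valFinset (hN z hz)
  simpa [hz0] using div_mem_valFinset hz (hN z hz)

/-- With `w = (t - 1)² / 4t` one has `w (w + 1) = ((t² - 1) / 4t)²`, and with `z = (t - 1)⁻¹`
one has `z (z + 1) = t / (t - 1)² = (4w)⁻¹`. -/
theorem sq_sub_one_div_mem_iff (h2 : (2 : F) ∈ valFinset L) {t : F} :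
    (t ^ 2 - 1) / t ∈ valFinset L ↔
      t - 1 ∈ valFinset L ∧ t ∈ valFinset L ∧ t + 1 ∈ valFinset L := by
  refine ⟨fun ht => ?_, fun ⟨h₁, h₂, h₃⟩ => ?_⟩
  swap
  · rw [show t ^ 2 - 1 = (t - 1) * (t + 1) by ring]
    exact div_mem_valFinset (mul_mem_valFinset h₁ h₃) h₂
  have hv0 := ne_zero_of_mem_valFinset ht
  have ht0 : t ≠ 0 := by rintro rfl; simp at hv0
  have ht1 : t - 1 ≠ 0 := by intro h; apply hv0; rw [sub_eq_zero.mp h]; norm_num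
  have h4 : (4 : F) ∈ valFinset L := by
    simpa [show (2 : F) * 2 = 4 by norm_num] using mul_mem_valFinset h2 h2
  have h4' := ne_zero_of_mem_valFinset h4
  have hw : (t - 1) ^ 2 / (4 * t) ∈ valFinset L := by
    refine hN _ ?_
    rw [show (t - 1) ^ 2 / (4 * t) * ((t - 1) ^ 2 / (4 * t) + 1) = ((t ^ 2 - 1) / t / 4) ^ 2 by
      field_simp; ring]
    exact pow_mem_valFinset (div_mem_valFinset ht h4) 2
  have hz : (t - 1)⁻¹ ∈ valFinset L := by
    refine hN _ ?_
    rw [show (t - 1)⁻¹ * ((t - 1)⁻¹ + 1) = ((t - 1) ^ 2 / (4 * t) * 4)⁻¹ by field_simp; ring]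
    exact inv_mem_valFinset (mul_mem_valFinset hw h4)
  have hsub : t - 1 ∈ valFinset L := by simpa using inv_mem_valFinset hz
  have htS : t ∈ valFinset L := by
    have := div_mem_valFinset (pow_mem_valFinset hsub 2) (mul_mem_valFinset hw h4)
    rwa [show (t - 1) ^ 2 / ((t - 1) ^ 2 / (4 * t) * 4) = t by field_simp] at this
  refine ⟨hsub, htS, ?_⟩
  have := div_mem_valFinset (mul_mem_valFinset ht htS) hsub
  rwa [show (t ^ 2 - 1) / t * t / (t - 1) = t + 1 by field_simp; ring] at this

theorem add_two_mem_of_add_one_not_mem [DecidableEq F] (h2 : (2 : F) ∈ valFinset L)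
    (hodd : Odd L.index) {t : F} (ht : t ∈ valFinset L) (ht1 : t + 1 ∉ valFinset L) :
    t + 2 ∈ valFinset L := by
  refine add_two_mem_of_card_eq ?_ (card_add_two_mem_eq h2) ht ht1
  simpa only [mul_add_one_mem_iff hN, sq_sub_one_div_mem_iff hN h2] using
    two_mul_card_mul_add_one_mem h2 hodd

end ConsecutiveProducts

theorem ZMod.le_two_mul_card_of_add_two_mem {p : ℕ} [NeZero p] {S : Finset (ZMod p)}
    (h1 : 1 ∈ S) (hgap : ∀ t ∈ S, t + 1 ∉ S → t + 2 ∈ S) : p ≤ 2 * #S := by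
  have hpred : ∀ k ∉ S, k - 1 ∈ S := by
    intro k hk
    by_contra hk1
    have hrun : ∀ n : ℕ, k - n ∉ S ∧ k - n - 1 ∉ S := by
      intro n
      induction n with
      | zero => simpa using ⟨hk, hk1⟩
      | succ n ih =>
        refine ⟨by simpa [sub_sub] using ih.2, fun h => ih.1 ?_⟩
        have := hgap _ h <| by
          rw [show k - ↑(n + 1) - 1 + 1 = k - n - 1 by push_cast; ring]
          exact ih.2
        rwa [show k - ↑(n + 1) - 1 + 2 = k - n by push_cast; ring] at this
    exact (hrun (k - 1).val).1 (by simpa using h1)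
  have hcompl : #Sᶜ ≤ #S :=
    card_le_card_of_injOn (· - 1) (fun k hk => hpred k (mem_compl.mp hk))
      (sub_left_injective.injOn)
  rw [card_compl, ZMod.card] at hcompl
  omega

theorem Subgroup.exists_zpow_neg_mul_mem {G : Type*} [Group G] {L : Subgroup G} [L.Normal]
    [L.FiniteIndex] {g : G} (hg : ∀ x : G, x ∈ Subgroup.zpowers g) {x : G} (hx : x ∉ L) :
    ∃ i : ℕ, 1 ≤ i ∧ i ≤ L.index - 1 ∧ g ^ (-(i : ℤ)) * x ∈ L := by
  obtain ⟨k, rfl⟩ := Subgroup.mem_zpowers_iff.mp (hg x)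
  have hn : (0 : ℤ) < L.index := by exact_mod_cast Nat.pos_of_ne_zero FiniteIndex.index_ne_zero
  have hmul : g ^ (k - k % L.index) ∈ L := by
    rw [Int.emod_def, sub_sub_cancel, zpow_mul, zpow_natCast]
    exact L.zpow_mem (L.pow_index_mem g) _
  have hr0 : k % L.index ≠ 0 := fun h => hx (by simpa [h] using hmul)
  have hr := Int.emod_lt_of_pos k hn
  have hr' := Int.emod_nonneg k hn.ne'
  refine ⟨(k % L.index).toNat, by omega, by omega, ?_⟩
  rwa [Int.toNat_of_nonneg hr', ← zpow_add, neg_add_eq_sub]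

theorem cyc_ne_zero_of_mem {p : ℕ} [NeZero p] {g : (ZMod p)ˣ} {L : Subgroup (ZMod p)ˣ}
    {i j : ℤ} {x : ZMod p} (hx : x ∈ coset p g L i) (hx1 : 1 + x ∈ coset p g L j) :
    cyc p g L i j ≠ 0 :=
  Set.ncard_ne_zero_of_mem ⟨⟨x, hx, rfl⟩, hx1⟩

/-- For `y = z⁻¹ ∈ g^i L` one has `1 + y = z (z + 1) y² ∈ g^{2i} L`. -/
theorem mem_valFinset_of_cyc_eq_zero {p : ℕ} [Fact p.Prime] {g : (ZMod p)ˣ}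
    {L : Subgroup (ZMod p)ˣ} (hg : ∀ x : (ZMod p)ˣ, x ∈ Subgroup.zpowers g)
    (hcyc : ∀ i : ℕ, 1 ≤ i → i ≤ L.index - 1 → cyc p g L i (2 * i) = 0)
    {z : ZMod p} (hz : z * (z + 1) ∈ valFinset L) : z ∈ valFinset L := by
  by_contra hzL
  have hz0 : z ≠ 0 := by rintro rfl; exact ne_zero_of_mem_valFinset hz (zero_mul _)
  set y := (Units.mk0 z hz0)⁻¹
  have hy : y ∉ L := fun h => hzL (by simpa [y] using coe_mem_valFinset.mpr (L.inv_mem h))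
  obtain ⟨i, hi1, hi2, hmem⟩ := Subgroup.exists_zpow_neg_mul_mem hg hy
  obtain ⟨w, hw, hwz⟩ := mem_valFinset.mp hz
  have hunits : g ^ (2 * (i : ℤ)) * (w * (g ^ (-(i : ℤ)) * y) ^ 2) = w * y ^ 2 := by
    rw [mul_pow, ← zpow_natCast (g ^ _), ← zpow_mul, mul_left_comm, ← mul_assoc (g ^ _),
      ← zpow_add]
    simp [mul_comm]
  refine cyc_ne_zero_of_mem (x := z⁻¹) ⟨_, hmem, ?_⟩
    ⟨_, L.mul_mem hw (L.pow_mem hmem 2), ?_⟩ (hcyc i hi1 hi2)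
  · simp [y]
  · simp only [hunits, Units.val_mul, Units.val_pow_eq_pow_val, hwz, y, Units.val_inv_eq_inv_val,
      Units.val_mk0]
    field_simp

theorem stmt_13_general (p : ℕ) [Fact p.Prime]
    (u : (ZMod p)ˣ) (hu : (u : ZMod p) = 2)
    (L : Subgroup (ZMod p)ˣ) (hL : L = Subgroup.closure {-1, u})
    (ℓ : ℕ) (hℓ : L.index = ℓ) (hℓp : ℓ.Prime) (hℓodd : Odd ℓ)
    (g : (ZMod p)ˣ) (hg : ∀ x : (ZMod p)ˣ, x ∈ Subgroup.zpowers g) :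
    ∃ i : ℕ, 1 ≤ i ∧ i ≤ ℓ - 1 ∧ cyc p g L (i : ℤ) (2 * (i : ℤ)) ≠ 0 := by
  subst hℓ
  have h2 : (2 : ZMod p) ∈ valFinset L :=
    hu ▸ coe_mem_valFinset.mpr (hL ▸ Subgroup.subset_closure (by simp))
  by_contra! hcyc
  have hp := ZMod.le_two_mul_card_of_add_two_mem one_mem_valFinset fun t =>
    add_two_mem_of_add_one_not_mem (fun z => mem_valFinset_of_cyc_eq_zero hg hcyc) h2 hℓodd
  have hcard : #(valFinset L) * L.index = p - 1 := by
    rw [card_valFinset, Subgroup.card_mul_index, Nat.card_eq_fintype_card, ZMod.card_units]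
  have h3 : 3 ≤ L.index := by
    obtain ⟨m, hm⟩ := hℓodd
    have := hℓp.two_le
    omega
  have h3S : #(valFinset L) * 3 ≤ p - 1 := hcard ▸ Nat.mul_le_mul_left _ h3
  have := (Fact.out : p.Prime).two_le
  omega

theorem stmt_13 (p : ℕ) [Fact p.Prime] (hodd : Odd p)
    (u : (ZMod p)ˣ) (hu : (u : ZMod p) = 2)
    (L : Subgroup (ZMod p)ˣ) (hL : L = Subgroup.closure {-1, u})
    (ℓ : ℕ) (hℓ : L.index = ℓ) (hℓp : ℓ.Prime) (hℓodd : Odd ℓ)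
    (g : (ZMod p)ˣ) (hg : ∀ x : (ZMod p)ˣ, x ∈ Subgroup.zpowers g) :
    ∃ i : ℕ, 1 ≤ i ∧ i ≤ ℓ - 1 ∧ cyc p g L (i : ℤ) (2 * (i : ℤ)) ≠ 0 :=
  stmt_13_general p u hu L hL ℓ hℓ hℓp hℓodd g hg
end

section
/- Let p be an odd prime, L = ⟨−1,2⟩ ≤ (Z/pZ)^× of index 4, and g a primitive root mod p. Then A(1,2) + A(3,2) > 0, where A(i,j) = |(1 + g^i L) ∩ g^j L|. -/
section Cyclic

variable {G : Type*} [CommGroup G] {g : G}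

theorem zpow_mem_iff_index_dvd (hg : ∀ x, x ∈ Subgroup.zpowers g) (H : Subgroup G) (k : ℤ) :
    g ^ k ∈ H ↔ (H.index : ℤ) ∣ k := by
  have hgen : ∀ y : G ⧸ H, y ∈ Subgroup.zpowers (g : G ⧸ H) := by
    intro y
    induction y using QuotientGroup.induction_on with
    | H x =>
      obtain ⟨m, rfl⟩ := Subgroup.mem_zpowers_iff.mp (hg x)
      exact ⟨m, rfl⟩
  rw [Subgroup.index, ← orderOf_eq_card_of_forall_mem_zpowers hgen, orderOf_dvd_iff_zpow_eq_one,
    ← QuotientGroup.mk_zpow, QuotientGroup.eq_one_iff]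

end Cyclic

section Units

variable {M : Type*} [CommMonoid M]

theorem isSquare_val_zpow_of_even (g : Mˣ) {k : ℤ} (hk : Even k) : IsSquare ((g ^ k : Mˣ) : M) :=
  (hk.isSquare_zpow g).map (Units.coeHom M)

theorem isSquare_val_of_mem {g : Mˣ} (hg : ∀ x, x ∈ Subgroup.zpowers g) {H : Subgroup Mˣ}
    (hH : 2 ∣ H.index) {x : Mˣ} (hx : x ∈ H) : IsSquare (x : M) := by
  obtain ⟨k, rfl⟩ := Subgroup.mem_zpowers_iff.mp (hg x)
  have hk : (H.index : ℤ) ∣ k := (zpow_mem_iff_index_dvd hg H k).mp hx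
  exact isSquare_val_zpow_of_even g
    (even_iff_two_dvd.mpr ((Int.natCast_dvd_natCast.mpr hH).trans hk))

end Units

section Field

variable {F : Type*} [Field F]

theorem isSquare_iff_of_isSquare_mul {a b : F} (ha : a ≠ 0) (hb : b ≠ 0)
    (hab : IsSquare (a * b)) : IsSquare a ↔ IsSquare b :=
  ⟨fun hsq => by simpa [ha] using hab.div hsq, fun hsq => by simpa [hb] using hab.div hsq⟩

theorem isSquare_add_iff_isSquare_sub (hneg : IsSquare (-1 : F))
    (h : ∀ c : F, ¬IsSquare c → IsSquare (c ^ 2 - 1)) {s q : F} (hs : ¬IsSquare s)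
    (hq : IsSquare q) (hq0 : q ≠ 0) : IsSquare (s + q) ↔ IsSquare (s - q) := by
  have hadd : s + q ≠ 0 := by
    intro h0
    refine hs ?_
    simpa [eq_neg_of_add_eq_zero_left h0] using hneg.mul hq
  have hsub : s - q ≠ 0 := fun h0 => hs (sub_eq_zero.mp h0 ▸ hq)
  have hc : ¬IsSquare (s / q) := fun hsq => hs (by simpa [hq0] using hsq.mul hq)
  have hprod : (s + q) * (s - q) = q ^ 2 * ((s / q) ^ 2 - 1) := by
    field_simp
    ring
  exact isSquare_iff_of_isSquare_mul hadd hsub (hprod ▸ (IsSquare.sq q).mul (h _ hc))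

end Field

namespace ZMod

variable {p : ℕ}

theorem isSquare_natCast_of_not_dvd {n : ℕ} (hn0 : 0 < n) (hneg : IsSquare (-1 : ZMod p))
    (hmin : ∀ m < n, IsSquare (m : ZMod p))
    (hn : ∀ q : ZMod p, IsSquare q → q ≠ 0 →
      (IsSquare ((n : ZMod p) + q) ↔ IsSquare ((n : ZMod p) - q)))
    {x : ℕ} (hxp : x < p) (hnx : ¬n ∣ x) : IsSquare (x : ZMod p) := by
  induction x using Nat.strong_induction_on with
  | _ x ih =>
  rcases Nat.lt_or_ge x n with hxn | hxn
  · exact hmin x hxn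
  obtain ⟨q, rfl⟩ := Nat.exists_eq_add_of_le hxn
  have hnq : ¬n ∣ q := fun h => hnx ((Nat.dvd_add_right dvd_rfl).mpr h)
  have hq : 0 < q := Nat.pos_of_ne_zero (by rintro rfl; exact hnq (dvd_zero n))
  have hq0 : (q : ZMod p) ≠ 0 := by
    rw [Ne, natCast_eq_zero_iff]
    exact fun h => (Nat.le_of_dvd hq h).not_gt (by omega)
  push_cast
  refine (hn q (ih q (by omega) (by omega) hnq) hq0).mpr ?_
  rcases Nat.lt_or_ge q n with hqn | hqn
  · obtain ⟨r, rfl⟩ := Nat.exists_eq_add_of_le hqn.le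
    simpa using hmin r (by omega)
  · obtain ⟨r, rfl⟩ := Nat.exists_eq_add_of_le hqn
    have hnr : ¬n ∣ r := fun h => hnq ((Nat.dvd_add_right dvd_rfl).mpr h)
    simpa using hneg.mul (ih r (by omega) (by omega) hnr)

theorem exists_not_isSquare_sq_sub_one [Fact p.Prime] (hp : p ≠ 2)
    (hneg : IsSquare (-1 : ZMod p)) : ∃ c : ZMod p, ¬IsSquare c ∧ ¬IsSquare (c ^ 2 - 1) := by
  by_contra! h
  obtain ⟨a, ha⟩ := FiniteField.exists_nonsquare (F := ZMod p) (by rwa [ringChar_zmod_n])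
  rw [← natCast_zmod_val a] at ha
  have hex : ∃ m : ℕ, ¬IsSquare (m : ZMod p) := ⟨a.val, ha⟩
  classical
  set n := Nat.find hex
  have hn : ¬IsSquare (n : ZMod p) := Nat.find_spec hex
  have hmin : ∀ m < n, IsSquare (m : ZMod p) := fun m hm => not_not.mp (Nat.find_min hex hm)
  have hn1 : 1 < n := by
    by_contra! h
    interval_cases n <;> simp at hn
  have hnp : n < p := (Nat.find_le ha).trans_lt (val_lt a)
  have hdvd : ¬n ∣ p - n := by
    intro h
    have hnp' : n ∣ p := by
      simpa [Nat.sub_add_cancel hnp.le] using (Nat.dvd_add_right h).mpr dvd_rfl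
    rcases (Fact.out : p.Prime).eq_one_or_self_of_dvd n hnp' with h1 | h1 <;> omega
  have hsq := isSquare_natCast_of_not_dvd (by omega) hneg hmin
    (fun q => isSquare_add_iff_isSquare_sub hneg h hn) (Nat.sub_lt_self (by omega) hnp.le) hdvd
  rw [Nat.cast_sub hnp.le, natCast_self, zero_sub] at hsq
  exact hn (by simpa using hneg.mul hsq)

end ZMod

section Cyclotomic

variable {p : ℕ} {g : (ZMod p)ˣ} {L : Subgroup (ZMod p)ˣ}

theorem val_zpow_mem_coset {k j : ℤ} (h : g ^ (k - j) ∈ L) :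
    ((g ^ k : (ZMod p)ˣ) : ZMod p) ∈ coset p g L j :=
  ⟨g ^ (k - j), h, by simp only [← zpow_add, add_sub_cancel]⟩

theorem cyc_pos_of_mem [NeZero p] {i j : ℤ} {x : ZMod p} (hx : x ∈ coset p g L i)
    (hx1 : 1 + x ∈ coset p g L j) : 0 < cyc p g L i j :=
  (Set.ncard_pos (Set.toFinite _)).mpr ⟨1 + x, ⟨x, hx, rfl⟩, hx1⟩

theorem exists_val_zpow_eq [Fact p.Prime] (hg : ∀ x, x ∈ Subgroup.zpowers g) {x : ZMod p}
    (hx : x ≠ 0) : ∃ k : ℤ, ((g ^ k : (ZMod p)ˣ) : ZMod p) = x := by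
  obtain ⟨k, hk⟩ := Subgroup.mem_zpowers_iff.mp (hg (Units.mk0 x hx))
  exact ⟨k, by rw [hk, Units.val_mk0]⟩

theorem cyc_one_two_add_cyc_three_two_pos [Fact p.Prime] (hg : ∀ x, x ∈ Subgroup.zpowers g)
    (hL : L.index = 4) {c : ZMod p} (hc : ¬IsSquare c) (hc1 : ¬IsSquare (c ^ 2 - 1)) :
    0 < cyc p g L 1 2 + cyc p g L 3 2 := by
  have hmem : ∀ k j : ℤ, 4 ∣ k - j → ((g ^ k : (ZMod p)ˣ) : ZMod p) ∈ coset p g L j :=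
    fun k j h => val_zpow_mem_coset ((zpow_mem_iff_index_dvd hg L _).mpr (by rwa [hL]))
  have hodd : ∀ {k : ℤ}, ¬IsSquare ((g ^ k : (ZMod p)ˣ) : ZMod p) → Odd k :=
    fun h => Int.not_even_iff_odd.mp fun hk => h (isSquare_val_zpow_of_even g hk)
  have hne : ∀ {x : ZMod p}, ¬IsSquare x → x ≠ 0 := fun hx h => hx (h ▸ IsSquare.zero)
  obtain ⟨m, hm⟩ := exists_val_zpow_eq hg (hne hc1)
  obtain ⟨k, rfl⟩ := exists_val_zpow_eq hg (hne hc)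
  obtain ⟨k', rfl⟩ := hodd hc
  obtain ⟨m', rfl⟩ := hodd (hm ▸ hc1)
  have hsq : ((g ^ (2 * k' + 1) : (ZMod p)ˣ) : ZMod p) ^ 2 ∈ coset p g L 2 := by
    rw [← Units.val_pow_eq_pow_val, ← zpow_natCast, ← zpow_mul]
    exact hmem _ _ ⟨k', by ring⟩
  rw [← sub_add_cancel (_ ^ 2) 1, add_comm, ← hm] at hsq
  rcases Int.even_or_odd m' with ⟨r, rfl⟩ | ⟨r, rfl⟩
  · exact Nat.add_pos_left (cyc_pos_of_mem (hmem _ _ ⟨r, by ring⟩) hsq) _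
  · exact Nat.add_pos_right _ (cyc_pos_of_mem (hmem _ _ ⟨r, by ring⟩) hsq)

end Cyclotomic

theorem stmt_16_general (p : ℕ) [Fact p.Prime] (hodd : Odd p)
    (u : (ZMod p)ˣ)
    (L : Subgroup (ZMod p)ˣ) (hL : L = Subgroup.closure {-1, u})
    (hℓ : L.index = 4)
    (g : (ZMod p)ˣ) (hg : ∀ x : (ZMod p)ˣ, x ∈ Subgroup.zpowers g) :
    0 < cyc p g L 1 2 + cyc p g L 3 2 := by
  have hp : p ≠ 2 := by
    rintro rfl
    exact Nat.not_odd_iff_even.mpr even_two hodd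
  have hneg : IsSquare (-1 : ZMod p) := by
    have hmem : (-1 : (ZMod p)ˣ) ∈ L := hL ▸ Subgroup.subset_closure (Set.mem_insert _ _)
    simpa using isSquare_val_of_mem hg (by rw [hℓ]; norm_num) hmem
  obtain ⟨c, hc, hc1⟩ := ZMod.exists_not_isSquare_sq_sub_one hp hneg
  exact cyc_one_two_add_cyc_three_two_pos hg hℓ hc hc1

theorem stmt_16 (p : ℕ) [Fact p.Prime] (hodd : Odd p)
    (u : (ZMod p)ˣ) (hu : (u : ZMod p) = 2)
    (L : Subgroup (ZMod p)ˣ) (hL : L = Subgroup.closure {-1, u})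
    (hℓ : L.index = 4)
    (g : (ZMod p)ˣ) (hg : ∀ x : (ZMod p)ˣ, x ∈ Subgroup.zpowers g) :
    0 < cyc p g L 1 2 + cyc p g L 3 2 :=
  stmt_16_general p hodd u L hL hℓ g hg
end

section
/- Let p be an odd prime, L = ⟨−1,2⟩ ≤ (Z/pZ)^× of index 5, and g a primitive root mod p. Then Σ_{i=1}^{4} A(i, 2i) > 0, where A(i,j) = |(1 + g^i L) ∩ g^j L| with indices taken mod 5. -/
/-!
For a finite field `F` and a subgroup `L` of `Fˣ` containing `-1`, the cyclotomic numbers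
`A(a, b) = #{x ∈ a | 1 + x ∈ b}` (`a, b ∈ Fˣ ⧸ L`) satisfy `A(a, b) = A(b, a)` (via `x ↦ -1 - x`)
and `A(a, b) = A(a⁻¹, b / a)` (via `x ↦ 1 / x`); row `a` sums to `|L|`, except row `1`, which
sums to `|L| - 1` because `x = -1` is lost. When the index is 5 these symmetries carry every pair
`(a, b)` with `1, a, b` distinct to a pair `(c, c²)`. So if all `A(c, c²)` vanished, row `a ≠ 1`
would read `A(1, a) + A(1, a⁻¹) = |L|`, and summing over the four `a ≠ 1` would give
`4 |L| = 2 ∑_{a ≠ 1} A(1, a) ≤ 2 (|L| - 1)`.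
-/

open Finset QuotientGroup

noncomputable section
open scoped Classical

section

variable {Q : Type*} [Group Q] {a : Q}

theorem orderOf_eq_five_of_card (h : Nat.card Q = 5) (ha : a ≠ 1) : orderOf a = 5 :=
  have : Fact (Nat.Prime 5) := ⟨by norm_num⟩
  orderOf_eq_prime (h ▸ pow_card_eq_one') ha

theorem pow_eq_of_card_eq_five (h : Nat.card Q = 5) {b : Q} (ha : a ≠ 1) (hb : b ≠ 1)
    (hab : a ≠ b) : b = a ^ 2 ∨ b = a ^ 3 ∨ b = a ^ 4 := by
  have : Fact (Nat.Prime 5) := ⟨by norm_num⟩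
  obtain ⟨k, rfl⟩ :=
    Submonoid.mem_powers_iff _ _ |>.mp (mem_powers_of_prime_card (g' := b) h ha)
  rw [← pow_mod_orderOf, orderOf_eq_five_of_card h ha] at hb hab ⊢
  have : k % 5 < 5 := Nat.mod_lt _ (by norm_num)
  interval_cases k % 5 <;> simp_all

end

variable {F : Type*} [Field F] [Fintype F] (L : Subgroup Fˣ)

def cyclotomicPairs (a b : Fˣ ⧸ L) : Finset (Fˣ × Fˣ) :=
  {p | (p.2 : F) = 1 + p.1 ∧ (p.1 : Fˣ ⧸ L) = a ∧ (p.2 : Fˣ ⧸ L) = b}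

def cyclotomicNumber (a b : Fˣ ⧸ L) : ℕ := #(cyclotomicPairs L a b)

variable {L}

@[simp]
theorem mem_cyclotomicPairs {a b : Fˣ ⧸ L} {x y : Fˣ} :
    (x, y) ∈ cyclotomicPairs L a b ↔ (y : F) = 1 + x ∧ (x : Fˣ ⧸ L) = a ∧ (y : Fˣ ⧸ L) = b := by
  simp [cyclotomicPairs]

theorem inv_mem_cyclotomicPairs {a b : Fˣ ⧸ L} {x y : Fˣ}
    (h : (x, y) ∈ cyclotomicPairs L a b) : (x⁻¹, y * x⁻¹) ∈ cyclotomicPairs L a⁻¹ (b / a) := by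
  obtain ⟨hxy, rfl, rfl⟩ := mem_cyclotomicPairs.mp h
  refine mem_cyclotomicPairs.mpr ⟨?_, by simp, by simp [div_eq_mul_inv]⟩
  push_cast
  rw [hxy]
  field_simp
  ring

theorem neg_mem_cyclotomicPairs (hneg : -1 ∈ L) {a b : Fˣ ⧸ L} {x y : Fˣ}
    (h : (x, y) ∈ cyclotomicPairs L a b) : (-y, -x) ∈ cyclotomicPairs L b a := by
  have hmk (z : Fˣ) : ((-z : Fˣ) : Fˣ ⧸ L) = z := by
    rw [← neg_one_mul, QuotientGroup.mk_mul, (QuotientGroup.eq_one_iff _).mpr hneg, one_mul]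
  obtain ⟨hxy, rfl, rfl⟩ := mem_cyclotomicPairs.mp h
  refine mem_cyclotomicPairs.mpr ⟨?_, hmk y, hmk x⟩
  push_cast
  rw [hxy]
  ring

variable (L)

theorem cyclotomicNumber_inv_div (a b : Fˣ ⧸ L) :
    cyclotomicNumber L a⁻¹ (b / a) = cyclotomicNumber L a b := by
  refine card_nbij' (fun p => (p.1⁻¹, p.2 * p.1⁻¹)) (fun p => (p.1⁻¹, p.2 * p.1⁻¹))
    (fun p hp => ?_) (fun p hp => inv_mem_cyclotomicPairs hp) (fun p _ => by simp)
    (fun p _ => by simp)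
  simpa using inv_mem_cyclotomicPairs (a := a⁻¹) hp

theorem cyclotomicNumber_comm (hneg : -1 ∈ L) (a b : Fˣ ⧸ L) :
    cyclotomicNumber L a b = cyclotomicNumber L b a :=
  card_nbij' (fun p => (-p.2, -p.1)) (fun p => (-p.2, -p.1))
    (fun _ hp => neg_mem_cyclotomicPairs hneg hp) (fun _ hp => neg_mem_cyclotomicPairs hneg hp)
    (fun p _ => by simp) (fun p _ => by simp)

theorem sum_cyclotomicNumber (a : Fˣ ⧸ L) :
    ∑ b, cyclotomicNumber L a b = #{x : Fˣ | (x : Fˣ ⧸ L) = a ∧ x ≠ -1} := by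
  have hfib (b : Fˣ ⧸ L) : cyclotomicPairs L a b =
      ({p : Fˣ × Fˣ | (p.2 : F) = 1 + p.1 ∧ (p.1 : Fˣ ⧸ L) = a} : Finset _).filter
        (fun p => (p.2 : Fˣ ⧸ L) = b) := by
    ext ⟨x, y⟩; simp [and_assoc]
  simp only [cyclotomicNumber, hfib]
  rw [← card_eq_sum_card_fiberwise (fun _ _ => mem_univ _)]
  refine card_nbij Prod.fst (fun p hp => ?_) (fun p hp q hq hpq => ?_) (fun x hx => ?_)
  · simp only [coe_filter, mem_univ, true_and, Set.mem_ofPred_eq] at hp ⊢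
    refine ⟨hp.2, fun h => p.2.ne_zero ?_⟩
    rw [hp.1, h]
    simp
  · simp only [coe_filter, mem_univ, true_and, Set.mem_ofPred_eq] at hp hq
    exact Prod.ext hpq (Units.ext (by rw [hp.1, hq.1, hpq]))
  · simp only [coe_filter, mem_univ, true_and, Set.mem_ofPred_eq] at hx
    have h1x : 1 + (x : F) ≠ 0 := fun h =>
      hx.2 (Units.ext (by simpa using eq_neg_of_add_eq_zero_right h))
    exact ⟨(x, Units.mk0 _ h1x), by simpa using hx.1, rfl⟩

theorem card_filter_mk_eq (a : Fˣ ⧸ L) : #{x : Fˣ | (x : Fˣ ⧸ L) = a} = Nat.card L := by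
  have := QuotientGroup.card_preimage_mk L {a}
  rw [Nat.card_eq_card_toFinset] at this
  simpa using this

variable {L}

theorem sum_cyclotomicNumber_of_ne_one (hneg : -1 ∈ L) {a : Fˣ ⧸ L} (ha : a ≠ 1) :
    ∑ b, cyclotomicNumber L a b = Nat.card L := by
  rw [sum_cyclotomicNumber, ← card_filter_mk_eq L a]
  congr 1
  refine filter_congr fun x _ => and_iff_left_of_imp ?_
  rintro rfl rfl
  exact ha ((QuotientGroup.eq_one_iff _).mpr hneg)

theorem sum_cyclotomicNumber_one_add_one (hneg : -1 ∈ L) :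
    ∑ b, cyclotomicNumber L 1 b + 1 = Nat.card L := by
  have : ({x : Fˣ | (x : Fˣ ⧸ L) = 1 ∧ x ≠ -1} : Finset _) =
      ({x : Fˣ | (x : Fˣ ⧸ L) = 1} : Finset _).erase (-1) := by
    ext x; simp [and_comm]
  rw [sum_cyclotomicNumber, this, card_erase_add_one, card_filter_mk_eq]
  simpa using (QuotientGroup.eq_one_iff _).mpr hneg

theorem cyclotomicNumber_eq_zero_of_ne (hneg : -1 ∈ L) (h5 : L.index = 5)
    (hsq : ∀ a : Fˣ ⧸ L, a ≠ 1 → cyclotomicNumber L a (a ^ 2) = 0) {a b : Fˣ ⧸ L}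
    (ha : a ≠ 1) (hb : b ≠ 1) (hab : a ≠ b) : cyclotomicNumber L a b = 0 := by
  have hord := orderOf_eq_five_of_card h5 ha
  have ha5 : a ^ 5 = 1 := hord ▸ pow_orderOf_eq_one a
  have ha_inv : a⁻¹ = a ^ 4 := inv_eq_of_mul_eq_one_right (by rw [← pow_succ']; exact ha5)
  have hsq_pow (k : ℕ) (hk : ¬ 5 ∣ k) : cyclotomicNumber L (a ^ k) ((a ^ k) ^ 2) = 0 :=
    hsq _ fun h => hk (hord ▸ orderOf_dvd_of_pow_eq_one h)
  -- the two symmetries move `(a, a³)` to `(a², a⁴)` and `(a, a⁴)` to `(a⁴, a⁸)`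
  rcases pow_eq_of_card_eq_five h5 ha hb hab with rfl | rfl | rfl
  · exact hsq a ha
  · calc cyclotomicNumber L a (a ^ 3)
        = cyclotomicNumber L (a ^ 4) (a ^ 7) := by
          rw [← cyclotomicNumber_inv_div, div_eq_mul_inv, ha_inv, ← pow_add]
      _ = cyclotomicNumber L (a ^ 2) ((a ^ 2) ^ 2) := by
          rw [cyclotomicNumber_comm L hneg, ← pow_mul,
            pow_eq_pow_iff_modEq.mpr (by rw [hord]; decide : 7 ≡ 2 [MOD orderOf a])]
      _ = 0 := hsq_pow 2 (by norm_num)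
  · calc cyclotomicNumber L a (a ^ 4)
        = cyclotomicNumber L (a ^ 4) ((a ^ 4) ^ 2) := by
          rw [← cyclotomicNumber_inv_div, div_eq_mul_inv, ha_inv, ← pow_add, ← pow_mul]
      _ = 0 := hsq_pow 4 (by norm_num)

theorem cyclotomicNumber_one_add_one_inv (hneg : -1 ∈ L)
    (hoff : ∀ a b : Fˣ ⧸ L, a ≠ 1 → b ≠ 1 → a ≠ b → cyclotomicNumber L a b = 0)
    {a : Fˣ ⧸ L} (ha : a ≠ 1) :
    cyclotomicNumber L 1 a + cyclotomicNumber L 1 a⁻¹ = Nat.card L := by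
  rw [← sum_cyclotomicNumber_of_ne_one hneg ha,
    Fintype.sum_eq_add 1 a ha.symm fun b ⟨hb1, hba⟩ => hoff a b ha hb1 (Ne.symm hba),
    cyclotomicNumber_comm L hneg 1, cyclotomicNumber_comm L hneg 1,
    ← cyclotomicNumber_inv_div L a a, div_self']

theorem exists_cyclotomicNumber_sq_pos (hneg : -1 ∈ L) (h5 : L.index = 5) :
    ∃ a : Fˣ ⧸ L, a ≠ 1 ∧ 0 < cyclotomicNumber L a (a ^ 2) := by
  by_contra! hsq
  have hoff (a b : Fˣ ⧸ L) : a ≠ 1 → b ≠ 1 → a ≠ b → cyclotomicNumber L a b = 0 :=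
    cyclotomicNumber_eq_zero_of_ne hneg h5 fun a ha => Nat.le_zero.mp (hsq a ha)
  set S := (univ : Finset (Fˣ ⧸ L)).erase 1
  have hS : #S = 4 := by
    rw [card_erase_of_mem (mem_univ _), card_univ, ← Nat.card_eq_fintype_card,
      ← Subgroup.index_eq_card, h5]
  have hinv : ∑ a ∈ S, cyclotomicNumber L 1 a⁻¹ = ∑ a ∈ S, cyclotomicNumber L 1 a :=
    sum_nbij' (·⁻¹) (·⁻¹) (by simp [S]) (by simp [S]) (by simp) (by simp) (by simp)
  have hrow : ∑ a ∈ S, cyclotomicNumber L 1 a + cyclotomicNumber L 1 1 + 1 = Nat.card L := by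
    rw [sum_erase_add _ _ (mem_univ 1), sum_cyclotomicNumber_one_add_one hneg]
  have : 4 * Nat.card L = 2 * ∑ a ∈ S, cyclotomicNumber L 1 a := by
    calc 4 * Nat.card L
        = ∑ a ∈ S, (cyclotomicNumber L 1 a + cyclotomicNumber L 1 a⁻¹) := by
          rw [sum_congr rfl fun a ha =>
              cyclotomicNumber_one_add_one_inv hneg hoff (ne_of_mem_erase ha),
            sum_const, hS, smul_eq_mul]
      _ = 2 * ∑ a ∈ S, cyclotomicNumber L 1 a := by rw [sum_add_distrib, hinv, two_mul]
  omega

end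

theorem exists_mem_Icc_zpow_eq_of_index_eq_five {G : Type*} [Group G] [Finite G] {g : G}
    (hg : ∀ x : G, x ∈ Subgroup.zpowers g) {L : Subgroup G} [L.Normal] (h5 : L.index = 5)
    {a : G ⧸ L} (ha : a ≠ 1) : ∃ k ∈ Finset.Icc (1 : ℤ) 4, (g : G ⧸ L) ^ k = a := by
  classical
  obtain ⟨x, rfl⟩ := QuotientGroup.mk_surjective a
  obtain ⟨m, rfl⟩ := Subgroup.mem_zpowers_iff.mp (hg x)
  rw [QuotientGroup.mk_zpow] at ha ⊢
  have hc : (g : G ⧸ L) ≠ 1 := fun hc => ha (by rw [hc, one_zpow])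
  have hm := Subgroup.zpow_mem_zpowers (g : G ⧸ L) m
  rw [mem_zpowers_iff_mem_range_orderOf, orderOf_eq_five_of_card h5 hc] at hm
  obtain ⟨k, hk, hka⟩ := Finset.mem_image.mp hm
  have hk0 : k ≠ 0 := by
    rintro rfl
    exact ha (by rw [← hka, pow_zero])
  refine ⟨k, ?_, by rw [zpow_natCast, hka]⟩
  simp only [Finset.mem_range, Finset.mem_Icc] at hk ⊢
  omega

theorem mem_coset_of_mk_eq {p : ℕ} {g x : (ZMod p)ˣ} {H : Subgroup (ZMod p)ˣ} {i : ℤ}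
    (h : (x : (ZMod p)ˣ ⧸ H) = (g : (ZMod p)ˣ ⧸ H) ^ i) : (x : ZMod p) ∈ coset p g H i :=
  ⟨(g ^ i)⁻¹ * x, QuotientGroup.eq.mp (by rw [h, QuotientGroup.mk_zpow]), by simp⟩

theorem cyc_pos_of_cyclotomicNumber_pos {p : ℕ} [Fact p.Prime] {g : (ZMod p)ˣ}
    {H : Subgroup (ZMod p)ˣ} {i j : ℤ}
    (h : 0 < cyclotomicNumber H ((g : (ZMod p)ˣ ⧸ H) ^ i) ((g : (ZMod p)ˣ ⧸ H) ^ j)) :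
    0 < cyc p g H i j := by
  obtain ⟨⟨x, y⟩, hxy⟩ := Finset.card_pos.mp h
  obtain ⟨hyx, hx, hy⟩ := mem_cyclotomicPairs.mp hxy
  exact (Set.ncard_pos (Set.toFinite _)).mpr
    ⟨y, ⟨x, mem_coset_of_mk_eq hx, hyx.symm⟩, mem_coset_of_mk_eq hy⟩

theorem stmt_17_general (p : ℕ) [Fact p.Prime]
    (u : (ZMod p)ˣ)
    (L : Subgroup (ZMod p)ˣ) (hL : L = Subgroup.closure {-1, u})
    (hℓ : L.index = 5)
    (g : (ZMod p)ˣ) (hg : ∀ x : (ZMod p)ˣ, x ∈ Subgroup.zpowers g) :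
    0 < ∑ i ∈ Finset.Icc 1 4, cyc p g L (i : ℤ) (2 * (i : ℤ)) := by
  have hneg : (-1 : (ZMod p)ˣ) ∈ L := hL ▸ Subgroup.subset_closure (Set.mem_insert _ _)
  obtain ⟨a, ha, hpos⟩ := exists_cyclotomicNumber_sq_pos hneg hℓ
  obtain ⟨k, hk, rfl⟩ := exists_mem_Icc_zpow_eq_of_index_eq_five hg hℓ ha
  refine lt_of_lt_of_le ?_ (Finset.single_le_sum (fun i _ => Nat.zero_le _) hk)
  apply cyc_pos_of_cyclotomicNumber_pos
  rwa [mul_comm, zpow_mul, zpow_ofNat]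

theorem stmt_17 (p : ℕ) [Fact p.Prime] (hodd : Odd p)
    (u : (ZMod p)ˣ) (hu : (u : ZMod p) = 2)
    (L : Subgroup (ZMod p)ˣ) (hL : L = Subgroup.closure {-1, u})
    (hℓ : L.index = 5)
    (g : (ZMod p)ˣ) (hg : ∀ x : (ZMod p)ˣ, x ∈ Subgroup.zpowers g) :
    0 < ∑ i ∈ Finset.Icc 1 4, cyc p g L (i : ℤ) (2 * (i : ℤ)) :=
  stmt_17_general p u L hL hℓ g hg
end

section
/- Let p be an odd prime, H ≤ (Z/pZ)^× a subgroup of index ℓ with −1 ∈ H, and g a primitive root. For every i,j, the map φ(α) = 1 + (α − 1)^{−1} is a bijection from (1 + g^i H) ∩ g^j H onto (1 + g^{−i} H) ∩ g^{j−i} H. -/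
/-!
Write `α = 1 + x` with `x = α - 1 ∈ g^i H`. Then `φ(α) = 1 + x⁻¹` with `x⁻¹ ∈ g^{-i} H`, and
`φ(α) = (1 + x) x⁻¹ = α x⁻¹ ∈ g^{j-i} H`. Since `φ` is an involution on the relevant sets, applying
the same argument to `(-i, j - i)` yields the inverse map.
-/

section Coset

variable {n : ℕ} {g : (ZMod n)ˣ} {H : Subgroup (ZMod n)ˣ} {a b : ZMod n} {i j : ℤ}

lemma mul_mem_coset_s18 (ha : a ∈ coset n g H i) (hb : b ∈ coset n g H j) :
    a * b ∈ coset n g H (i + j) := by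
  obtain ⟨u, hu, rfl⟩ := ha
  obtain ⟨v, hv, rfl⟩ := hb
  exact ⟨u * v, H.mul_mem hu hv, by simp only [zpow_add, Units.val_mul]; ring⟩

lemma inv_mem_coset (ha : a ∈ coset n g H i) : a⁻¹ ∈ coset n g H (-i) := by
  obtain ⟨u, hu, rfl⟩ := ha
  exact ⟨u⁻¹, H.inv_mem hu, by rw [ZMod.inv_coe_unit, mul_inv, zpow_neg]⟩

lemma mul_inv_cancel_of_mem_coset (ha : a ∈ coset n g H i) : a * a⁻¹ = 1 := by
  obtain ⟨u, -, rfl⟩ := ha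
  exact ZMod.mul_inv_of_unit _ (Units.isUnit _)

lemma inv_inv_of_mem_coset (ha : a ∈ coset n g H i) : a⁻¹⁻¹ = a := by
  obtain ⟨u, -, rfl⟩ := ha
  rw [ZMod.inv_coe_unit, ZMod.inv_coe_unit, inv_inv]

end Coset

lemma mapsTo_one_add_inv_sub_one (n : ℕ) (g : (ZMod n)ˣ) (H : Subgroup (ZMod n)ˣ) (i j : ℤ) :
    Set.MapsTo (fun α : ZMod n => 1 + (α - 1)⁻¹)
      (((fun x => 1 + x) '' coset n g H i) ∩ coset n g H j)
      (((fun x => 1 + x) '' coset n g H (-i)) ∩ coset n g H (j - i)) := by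
  rintro _ ⟨⟨x, hx, rfl⟩, hα⟩
  simp only [add_sub_cancel_left]
  refine ⟨⟨x⁻¹, inv_mem_coset hx, rfl⟩, ?_⟩
  have hφ : 1 + x⁻¹ = (1 + x) * x⁻¹ := by
    rw [add_mul, one_mul, mul_inv_cancel_of_mem_coset hx, add_comm]
  rw [hφ, sub_eq_add_neg]
  exact mul_mem_coset_s18 hα (inv_mem_coset hx)

lemma leftInvOn_one_add_inv_sub_one (n : ℕ) (g : (ZMod n)ˣ) (H : Subgroup (ZMod n)ˣ) (i : ℤ) :
    Set.LeftInvOn (fun α : ZMod n => 1 + (α - 1)⁻¹) (fun α : ZMod n => 1 + (α - 1)⁻¹)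
      ((fun x => 1 + x) '' coset n g H i) := by
  rintro _ ⟨x, hx, rfl⟩
  simp only [add_sub_cancel_left, inv_inv_of_mem_coset hx]

theorem stmt_18_general (p : ℕ)
    (H : Subgroup (ZMod p)ˣ)
    (g : (ZMod p)ˣ)
    (i j : ℤ) :
    Set.BijOn (fun α : ZMod p => 1 + (α - 1)⁻¹)
      (((fun x => 1 + x) '' coset p g H i) ∩ coset p g H j)
      (((fun x => 1 + x) '' coset p g H (-i)) ∩ coset p g H (j - i)) := by
  refine Set.InvOn.bijOn
    ⟨(leftInvOn_one_add_inv_sub_one p g H i).mono Set.inter_subset_left,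
      (leftInvOn_one_add_inv_sub_one p g H (-i)).mono Set.inter_subset_left⟩
    (mapsTo_one_add_inv_sub_one p g H i j) ?_
  simpa using mapsTo_one_add_inv_sub_one p g H (-i) (j - i)

theorem stmt_18 (p : ℕ) [Fact p.Prime] (hodd : Odd p)
    (H : Subgroup (ZMod p)ˣ) (ℓ : ℕ) (hℓ : H.index = ℓ) (hneg : (-1 : (ZMod p)ˣ) ∈ H)
    (g : (ZMod p)ˣ) (hg : ∀ x : (ZMod p)ˣ, x ∈ Subgroup.zpowers g)
    (i j : ℤ) :
    Set.BijOn (fun α : ZMod p => 1 + (α - 1)⁻¹)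
      (((fun x => 1 + x) '' coset p g H i) ∩ coset p g H j)
      (((fun x => 1 + x) '' coset p g H (-i)) ∩ coset p g H (j - i)) :=
  stmt_18_general p H g i j
end
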